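/- arXiv:1208.1238 — 8 statements merged into one kernel-verified Lean document; each statement's English description precedes it below -/
import Mathlib

section
/- Let n ≥ 1, let μ = (-1)^n, and let Δ_n be the n×n complex matrix with (i,j) entry μ^i·(−μ)^{j−1}·C(j−1, n−i) for 1 ≤ i, j ≤ n. Then Δ_n = J_n(μ)ᵀ · Δ_n · J_n(μ). -/
open Matrix BigOperators Finset

noncomputable section

/-- The `n × n` upper-triangular Jordan block with eigenvalue `μ`:
`μ` on the diagonal, `1` on the first superdiagonal, `0` elsewhere. -/
def Jmat (n : ℕ) (μ : ℂ) : Matrix (Fin n) (Fin n) ℂ :=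
  Matrix.of fun i j => if i = j then μ else if (j : ℕ) = (i : ℕ) + 1 then 1 else 0

/-- The Pascal-type matrix `Δ_n`, whose 1-based `(i,j)` entry is
`μ^i * (−μ)^(j−1) * C(j−1, n−i)` (here indices are 0-based, so shifted by one). -/
def Delta (n : ℕ) (μ : ℂ) : Matrix (Fin n) (Fin n) ℂ :=
  Matrix.of fun i j =>
    μ ^ ((i : ℕ) + 1) * (-μ) ^ (j : ℕ) * ((j : ℕ).choose (n - ((i : ℕ) + 1)) : ℂ)

/-- The `2n × 2n` block matrix `H_{2n}(μ) = [[0, I],[J_n(μ), 0]]`. -/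
def Hmat (n : ℕ) (μ : ℂ) : Matrix (Fin n ⊕ Fin n) (Fin n ⊕ Fin n) ℂ :=
  Matrix.fromBlocks 0 1 (Jmat n μ) 0

/-- The `n × n` reversed identity matrix: `1` on the antidiagonal, `0` elsewhere. -/
def Rev (n : ℕ) : Matrix (Fin n) (Fin n) ℂ :=
  Matrix.of fun i j => if j = i.rev then 1 else 0

lemma sum_left (n : ℕ) (μ : ℂ) (X : Fin n → ℂ) (i : Fin n) :
    ∑ k, Jmat n μ k i * X k
      = μ * X i + ∑ k : Fin n, (if (i : ℕ) = (k : ℕ) + 1 then X k else 0) := by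
  have h : ∀ k : Fin n, Jmat n μ k i * X k
      = (if k = i then μ * X k else 0) + (if (i : ℕ) = (k : ℕ) + 1 then X k else 0) := by
    intro k
    simp only [Jmat, of_apply]
    rcases eq_or_ne k i with h | h
    · subst h
      rw [if_pos rfl, if_pos rfl, if_neg (by omega)]
      ring
    · rw [if_neg h, if_neg h]
      split_ifs <;> ring
  rw [Finset.sum_congr rfl (fun k _ => h k), Finset.sum_add_distrib,
    Finset.sum_ite_eq' Finset.univ i (fun k => μ * X k), if_pos (Finset.mem_univ i)]

lemma sum_right (n : ℕ) (μ : ℂ) (Y : Fin n → ℂ) (j : Fin n) :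
    ∑ l, Y l * Jmat n μ l j
      = μ * Y j + ∑ l : Fin n, (if (j : ℕ) = (l : ℕ) + 1 then Y l else 0) := by
  have h : ∀ l : Fin n, Y l * Jmat n μ l j
      = (if l = j then μ * Y l else 0) + (if (j : ℕ) = (l : ℕ) + 1 then Y l else 0) := by
    intro l
    simp only [Jmat, of_apply]
    rcases eq_or_ne l j with h | h
    · subst h
      rw [if_pos rfl, if_pos rfl, if_neg (by omega)]
      ring
    · rw [if_neg h, if_neg h]
      split_ifs <;> ring
  rw [Finset.sum_congr rfl (fun l _ => h l), Finset.sum_add_distrib,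
    Finset.sum_ite_eq' Finset.univ j (fun l => μ * Y l), if_pos (Finset.mem_univ j)]

lemma shift_zero (m : ℕ) (X : Fin (m + 1) → ℂ) :
    ∑ k : Fin (m + 1), (if ((0 : Fin (m + 1)) : ℕ) = (k : ℕ) + 1 then X k else 0) = 0 := by
  simp

lemma shift_succ (m : ℕ) (X : Fin (m + 1) → ℂ) (i' : Fin m) :
    ∑ k : Fin (m + 1), (if ((i'.succ : Fin (m + 1)) : ℕ) = (k : ℕ) + 1 then X k else 0)
      = X i'.castSucc := by
  have h : ∀ k : Fin (m + 1), (((i'.succ : Fin (m + 1)) : ℕ) = (k : ℕ) + 1) ↔ k = i'.castSucc := by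
    intro k
    rw [Fin.ext_iff]
    simp only [Fin.val_succ, Fin.coe_castSucc]
    omega
  rw [Finset.sum_congr rfl (fun k _ => if_congr (h k) rfl rfl),
    Finset.sum_ite_eq' Finset.univ i'.castSucc X, if_pos (Finset.mem_univ _)]


/-- `Δ_n = J_n(μ)ᵀ · Δ_n · J_n(μ)` when `μ = (-1)^n`. -/
theorem stmt_0 (n : ℕ) (hn : 1 ≤ n) (μ : ℂ) (hμ : μ = (-1) ^ n) :
    Delta n μ = (Jmat n μ)ᵀ * Delta n μ * Jmat n μ := by
  have h2 : μ ^ 2 = 1 := by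
    rw [hμ, ← pow_mul, mul_comm, pow_mul, neg_one_sq, one_pow]
  obtain ⟨m, rfl⟩ : ∃ m, n = m + 1 := ⟨n - 1, by omega⟩
  ext i j
  symm
  rw [Matrix.mul_apply]
  simp only [Matrix.mul_apply, Matrix.transpose_apply]
  rw [sum_right]
  simp only [sum_left]
  induction j using Fin.cases with
  | zero =>
    rw [shift_zero]
    induction i using Fin.cases with
    | zero =>
      rw [shift_zero]
      linear_combination Delta (m + 1) μ 0 0 * h2
    | succ i' =>
      rw [shift_succ]
      have hz : Delta (m + 1) μ i'.castSucc 0 = 0 := by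
        have hi := i'.2
        simp only [Delta, of_apply, Fin.coe_castSucc, Fin.val_zero]
        rw [Nat.choose_eq_zero_of_lt (by omega)]
        simp
      rw [hz]
      linear_combination Delta (m + 1) μ i'.succ 0 * h2
  | succ j' =>
    rw [shift_succ]
    induction i using Fin.cases with
    | zero =>
      rw [shift_zero, shift_zero]
      have hz : Delta (m + 1) μ 0 j'.castSucc = 0 := by
        have hj := j'.2
        simp only [Delta, of_apply, Fin.coe_castSucc, Fin.val_zero]
        rw [Nat.choose_eq_zero_of_lt (by omega)]
        simp
      rw [hz]
      linear_combination Delta (m + 1) μ 0 j'.succ * h2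
    | succ i' =>
      rw [shift_succ, shift_succ]
      have hi := i'.2
      have hj := j'.2
      simp only [Delta, of_apply, Fin.val_succ, Fin.coe_castSucc]
      have e1 : m + 1 - (↑i' + 1 + 1) = m - 1 - ↑i' := by omega
      have e2 : m + 1 - (↑i' + 1) = (m - 1 - ↑i') + 1 := by omega
      rw [e1, e2, Nat.choose_succ_succ' (↑j' : ℕ) ((m - 1 - ↑i'))]
      push_cast
      linear_combination (μ ^ ((↑i' : ℕ) + 1 + 1) * (-μ) ^ ((↑j' : ℕ) + 1) *
          (((↑j' : ℕ) + 1).choose (m - 1 - ↑i') : ℂ) -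
        μ ^ ((↑i' : ℕ) + 1) * (-μ) ^ (↑j' : ℕ) *
          (((↑j' : ℕ)).choose ((m - 1 - ↑i') + 1) : ℂ)) * h2
end
end

section
/- Let n ≥ 1, let μ = (-1)^n, and let Δ_n be the n×n complex matrix with (i,j) entry μ^i·(−μ)^{j−1}·C(j−1, n−i) for 1 ≤ i, j ≤ n. Then the matrix Δ_n is invertible, J_n(μ)ᵀ is invertible, and (J_n(μ)ᵀ)⁻¹ = Δ_n · J_n(μ) · Δ_n⁻¹; equivalently, the Jordan canonical form of the inverse transpose of J_n((−1)^n) is J_n((−1)^n) itself, with the similarity implemented by Δ_n. -/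
open Matrix BigOperators Finset

noncomputable section

lemma Jmat_apply (n : ℕ) (μ : ℂ) (l j : Fin n) :
    Jmat n μ l j = if l = j then μ else if (j : ℕ) = (l : ℕ) + 1 then 1 else 0 := rfl

lemma mul_J_zero (n : ℕ) (μ : ℂ) (A : Matrix (Fin n) (Fin n) ℂ) (i j : Fin n)
    (hj : (j : ℕ) = 0) : (A * Jmat n μ) i j = μ * A i j := by
  rw [mul_apply, Finset.sum_eq_single j]
  · rw [Jmat_apply, if_pos rfl]; ring
  · intro b _ hb
    rw [Jmat_apply, if_neg hb, if_neg (by omega), mul_zero]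
  · intro h; exact absurd (Finset.mem_univ j) h

lemma mul_J_succ (n : ℕ) (μ : ℂ) (A : Matrix (Fin n) (Fin n) ℂ) (i j k : Fin n)
    (hjk : (j : ℕ) = (k : ℕ) + 1) : (A * Jmat n μ) i j = μ * A i j + A i k := by
  rw [mul_apply]
  have hkj : k ≠ j := fun h => by rw [h] at hjk; omega
  have step : ∀ l ∈ Finset.univ, A i l * Jmat n μ l j =
      (if l = j then μ * A i j else 0) + (if l = k then A i k else 0) := by
    intro l _
    by_cases h1 : l = j
    · subst h1
      rw [Jmat_apply, if_pos rfl, if_pos rfl, if_neg (Ne.symm hkj), add_zero]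
      ring
    · by_cases h2 : l = k
      · subst h2
        rw [Jmat_apply, if_neg h1, if_pos hjk, if_neg h1, if_pos rfl, zero_add, mul_one]
      · rw [Jmat_apply, if_neg h1, if_neg (fun h : (j:ℕ) = (l:ℕ)+1 => h2 (Fin.ext (by omega))),
          if_neg h1, if_neg h2, mul_zero, add_zero]
  rw [Finset.sum_congr rfl step, Finset.sum_add_distrib,
    Finset.sum_ite_eq' Finset.univ j, Finset.sum_ite_eq' Finset.univ k,
    if_pos (Finset.mem_univ _), if_pos (Finset.mem_univ _)]

lemma Jt_mul_zero (n : ℕ) (μ : ℂ) (A : Matrix (Fin n) (Fin n) ℂ) (i j : Fin n)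
    (hi : (i : ℕ) = 0) : ((Jmat n μ)ᵀ * A) i j = μ * A i j := by
  rw [mul_apply, Finset.sum_eq_single i]
  · rw [transpose_apply, Jmat_apply, if_pos rfl]
  · intro b _ hb
    rw [transpose_apply, Jmat_apply, if_neg hb, if_neg (by omega), zero_mul]
  · intro h; exact absurd (Finset.mem_univ i) h

lemma Jt_mul_succ (n : ℕ) (μ : ℂ) (A : Matrix (Fin n) (Fin n) ℂ) (i j k : Fin n)
    (hik : (i : ℕ) = (k : ℕ) + 1) : ((Jmat n μ)ᵀ * A) i j = μ * A i j + A k j := by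
  rw [mul_apply]
  have hki : k ≠ i := fun h => by rw [h] at hik; omega
  have step : ∀ l ∈ Finset.univ, (Jmat n μ)ᵀ i l * A l j =
      (if l = i then μ * A i j else 0) + (if l = k then A k j else 0) := by
    intro l _
    by_cases h1 : l = i
    · subst h1
      rw [transpose_apply, Jmat_apply, if_pos rfl, if_pos rfl,
        if_neg (Ne.symm hki), add_zero]
    · by_cases h2 : l = k
      · subst h2
        rw [transpose_apply, Jmat_apply, if_neg h1, if_pos hik,
          if_neg h1, if_pos rfl, zero_add, one_mul]
      · rw [transpose_apply, Jmat_apply, if_neg h1,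
          if_neg (fun h : (i:ℕ) = (l:ℕ)+1 => h2 (Fin.ext (by omega))),
          if_neg h1, if_neg h2, zero_mul, add_zero]
  rw [Finset.sum_congr rfl step, Finset.sum_add_distrib,
    Finset.sum_ite_eq' Finset.univ i, Finset.sum_ite_eq' Finset.univ k,
    if_pos (Finset.mem_univ _), if_pos (Finset.mem_univ _)]

lemma key (n : ℕ) (hn : 1 ≤ n) (μ : ℂ) (hμ : μ = (-1) ^ n) :
    (Jmat n μ)ᵀ * Delta n μ * Jmat n μ = Delta n μ := by
  have hμ2 : μ * μ = 1 := by rw [hμ, ← mul_pow]; norm_num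
  ext i j
  rcases i with ⟨iv, hi⟩
  rcases j with ⟨jv, hj⟩
  by_cases hiv : iv = 0
  · subst hiv
    by_cases hjv : jv = 0
    · subst hjv
      rw [mul_J_zero n μ _ _ _ rfl, Jt_mul_zero n μ _ _ _ rfl, ← mul_assoc, hμ2, one_mul]
    · obtain ⟨b, rfl⟩ : ∃ b, jv = b + 1 := ⟨jv - 1, by omega⟩
      have hbn : b < n := by omega
      rw [mul_J_succ n μ _ _ ⟨b + 1, hj⟩ ⟨b, hbn⟩ rfl,
        Jt_mul_zero n μ _ _ _ rfl, Jt_mul_zero n μ _ _ _ rfl]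
      have hch : b.choose (n - 1) = 0 := Nat.choose_eq_zero_of_lt (by omega)
      simp only [Delta, Matrix.of_apply]
      show μ * (μ * (μ ^ (0+1) * (-μ) ^ (b+1) * _)) + μ * (μ ^ (0+1) * (-μ) ^ b * _) = _
      rw [hch]
      push_cast
      linear_combination (μ ^ (0+1) * (-μ) ^ (b+1) * (((b+1).choose (n - (0+1))) : ℂ)) * hμ2
  · obtain ⟨a, rfl⟩ : ∃ a, iv = a + 1 := ⟨iv - 1, by omega⟩
    have han : a < n := by omega
    by_cases hjv : jv = 0
    · subst hjv
      rw [mul_J_zero n μ _ _ _ rfl, Jt_mul_succ n μ _ ⟨a + 1, hi⟩ _ ⟨a, han⟩ rfl]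
      have hch : (0 : ℕ).choose (n - (a + 1)) = 0 := Nat.choose_eq_zero_of_lt (by omega)
      simp only [Delta, Matrix.of_apply]
      show μ * (μ * _ + μ ^ (a+1) * (-μ) ^ (0:ℕ) * _) = _
      rw [hch]
      push_cast
      linear_combination (μ ^ (a+1+1) * (-μ) ^ (0:ℕ) * (((0:ℕ).choose (n - (a+1+1))) : ℂ)) * hμ2
    · obtain ⟨b, rfl⟩ : ∃ b, jv = b + 1 := ⟨jv - 1, by omega⟩
      have hbn : b < n := by omega
      rw [mul_J_succ n μ _ _ ⟨b + 1, hj⟩ ⟨b, hbn⟩ rfl,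
        Jt_mul_succ n μ _ ⟨a + 1, hi⟩ ⟨b + 1, hj⟩ ⟨a, han⟩ rfl,
        Jt_mul_succ n μ _ ⟨a + 1, hi⟩ ⟨b, hbn⟩ ⟨a, han⟩ rfl]
      simp only [Delta, Matrix.of_apply]
      have h1 : n - (a + 1 + 1) + 1 = n - (a + 1) := by omega
      have h2 : (b + 1).choose (n - (a + 1)) =
          b.choose (n - (a + 1 + 1)) + b.choose (n - (a + 1 + 1) + 1) := by
        rw [← h1]; exact Nat.choose_succ_succ b (n - (a + 1 + 1))
      show μ * (μ * (μ ^ (a+1+1) * (-μ) ^ (b+1) * _) + μ ^ (a+1) * (-μ) ^ (b+1) * _)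
        + (μ * (μ ^ (a+1+1) * (-μ) ^ b * _) + μ ^ (a+1) * (-μ) ^ b * _) = _
      rw [h2, h1]
      push_cast
      linear_combination (μ ^ (a+1+1) * (-μ) ^ (b+1) * (((b+1).choose (n - (a+1+1))) : ℂ)
        - μ ^ (a+1) * (-μ) ^ b * ((b.choose (n - (a+1))) : ℂ)) * hμ2

lemma delta_rev_apply (n : ℕ) (μ : ℂ) (i j : Fin n) :
    (Delta n μ * Rev n) i j = Delta n μ i j.rev := by
  rw [mul_apply, Finset.sum_eq_single j.rev]
  · show Delta n μ i j.rev * (if j = j.rev.rev then 1 else 0) = _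
    rw [if_pos (Fin.rev_rev j).symm, mul_one]
  · intro b _ hb
    have hnb : ¬ (j = b.rev) := fun h => hb (by rw [h, Fin.rev_rev])
    show Delta n μ i b * (if j = b.rev then 1 else 0) = 0
    rw [if_neg hnb, mul_zero]
  · intro h; exact absurd (Finset.mem_univ _) h

/-- `Δ_n` and `J_n(μ)ᵀ` are invertible and
`(J_n(μ)ᵀ)⁻¹ = Δ_n · J_n(μ) · Δ_n⁻¹` when `μ = (-1)^n`. -/
theorem stmt_1 (n : ℕ) (hn : 1 ≤ n) (μ : ℂ) (hμ : μ = (-1) ^ n) :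
    IsUnit (Delta n μ) ∧ IsUnit (Jmat n μ)ᵀ ∧
      ((Jmat n μ)ᵀ)⁻¹ = Delta n μ * Jmat n μ * (Delta n μ)⁻¹ := by
  have hμ0 : μ ≠ 0 := by rw [hμ]; exact pow_ne_zero n (by norm_num)
  have hJu : IsUnit (Jmat n μ)ᵀ := by
    have htri : ∀ i j : Fin n, j < i → Jmat n μ i j = 0 := by
      intro i j hij
      have hlt : (j : ℕ) < (i : ℕ) := hij
      rw [Jmat_apply, if_neg (fun h => by rw [h] at hlt; omega), if_neg (by omega)]
    have hdetJ : (Jmat n μ).det = μ ^ n := by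
      rw [Matrix.det_of_upperTriangular htri]
      have : ∀ i : Fin n, Jmat n μ i i = μ := fun i => by rw [Jmat_apply, if_pos rfl]
      rw [Finset.prod_congr rfl (fun i _ => this i), Finset.prod_const,
        Finset.card_univ, Fintype.card_fin]
    rw [Matrix.isUnit_iff_isUnit_det, Matrix.det_transpose, hdetJ]
    exact isUnit_iff_ne_zero.mpr (pow_ne_zero n hμ0)
  have hDRlow : ∀ i j : Fin n, i < j → (Delta n μ * Rev n) i j = 0 := by
    intro i j hij
    have hlt : (i : ℕ) < (j : ℕ) := hij
    rw [delta_rev_apply]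
    simp only [Delta, Matrix.of_apply]
    have hrev : ((j.rev : Fin n) : ℕ) = n - ((j : ℕ) + 1) := Fin.val_rev j
    have hch : ((j.rev : Fin n) : ℕ).choose (n - ((i : ℕ) + 1)) = 0 := by
      apply Nat.choose_eq_zero_of_lt
      have hjn := j.2
      omega
    rw [hch]; push_cast; ring
  have hdetDR : (Delta n μ * Rev n).det ≠ 0 := by
    rw [Matrix.det_of_lowerTriangular _ hDRlow]
    apply Finset.prod_ne_zero_iff.mpr
    intro i _
    rw [delta_rev_apply]
    simp only [Delta, Matrix.of_apply]
    have hrev : ((i.rev : Fin n) : ℕ) = n - ((i : ℕ) + 1) := Fin.val_rev i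
    have hch : ((i.rev : Fin n) : ℕ).choose (n - ((i : ℕ) + 1)) = 1 := by
      rw [hrev, Nat.choose_self]
    rw [hch]
    push_cast
    exact mul_ne_zero (mul_ne_zero (pow_ne_zero _ hμ0)
      (pow_ne_zero _ (neg_ne_zero.mpr hμ0))) one_ne_zero
  have hdetD : (Delta n μ).det ≠ 0 := by
    intro h
    apply hdetDR
    rw [Matrix.det_mul, h, zero_mul]
  have hDu : IsUnit (Delta n μ) :=
    (Matrix.isUnit_iff_isUnit_det _).mpr (isUnit_iff_ne_zero.mpr hdetD)
  refine ⟨hDu, hJu, ?_⟩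
  have hkey := key n hn μ hμ
  have h1 : (Jmat n μ)ᵀ * (Delta n μ * Jmat n μ * (Delta n μ)⁻¹) = 1 := by
    rw [show (Jmat n μ)ᵀ * (Delta n μ * Jmat n μ * (Delta n μ)⁻¹) =
      ((Jmat n μ)ᵀ * Delta n μ * Jmat n μ) * (Delta n μ)⁻¹ by
        rw [mul_assoc, mul_assoc, mul_assoc]]
    rw [hkey, Matrix.mul_nonsing_inv _ (isUnit_iff_ne_zero.mpr hdetD)]
  exact Matrix.inv_eq_right_inv h1
end
end

section
/- Let n ≥ 1, let μ = (-1)^n, and let Δ_n be the n×n complex matrix with (i,j) entry μ^i·(−μ)^{j−1}·C(j−1, n−i) for 1 ≤ i, j ≤ n. Let Δ̃_n be the reflection of Δ_n with respect to its center, i.e. the n×n matrix whose (i,j) entry equals the (n−i+1, n−j+1) entry of Δ_n. Then Δ̃_n · Δ_n = I_n; in particular, Δ_n is invertible and its inverse equals its central reflection. -/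
open Matrix BigOperators Finset

noncomputable section

/-!
Reversing the summation index turns the `(i, j)` entry of `Δ̃_n Δ_n` into
`μ^(n-i) μ^n (-μ)^j ∑_m (-1)^m C(j, m) C(m, i)`. The sum is binomial inversion, equal to
`(-1)^i δ_ij`, so the diagonal entries collapse to `μ^(2n)`, which is `1` for `μ = (-1)^n`.
-/

theorem Int.alternating_sum_range_choose_mul_choose (i j : ℕ) :
    ∑ m ∈ Finset.range (j + 1), (-1) ^ m * (j.choose m * m.choose i : ℤ) =
      if i = j then (-1) ^ i else 0 := by
  rcases lt_or_ge j i with hji | hij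
  · rw [if_neg hji.ne', sum_eq_zero]
    intro m hm
    rw [Nat.choose_eq_zero_of_lt (show m < i by rw [mem_range] at hm; omega)]
    simp
  obtain ⟨d, rfl⟩ := Nat.exists_eq_add_of_le hij
  have hbelow : ∑ m ∈ Finset.range i, (-1) ^ m * ((i + d).choose m * m.choose i : ℤ) = 0 :=
    sum_eq_zero fun m hm ↦ by rw [Nat.choose_eq_zero_of_lt (mem_range.1 hm)]; simp
  have hshift (t : ℕ) : (-1) ^ (i + t) * ((i + d).choose (i + t) * (i + t).choose i : ℤ) =
      (-1) ^ i * (i + d).choose i * ((-1) ^ t * d.choose t) := by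
    rw [← Nat.cast_mul, Nat.choose_mul (Nat.le_add_right i t)]
    push_cast
    simp only [Nat.add_sub_cancel_left, pow_add]
    ring
  rw [show i + d + 1 = i + (d + 1) by omega, sum_range_add, hbelow, zero_add,
    sum_congr rfl fun t _ ↦ hshift t, ← mul_sum, Int.alternating_sum_range_choose]
  rcases eq_or_ne d 0 with rfl | hd
  · simp
  · simp [hd]

theorem sum_range_neg_one_pow_mul_choose_mul_choose {R : Type*} [CommRing R] {i j N : ℕ}
    (hjN : j < N) :
    ∑ m ∈ range N, (-1) ^ m * (j.choose m * m.choose i : R) =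
      if i = j then (-1) ^ i else 0 := by
  rw [← sum_subset (range_subset_range.2 hjN) fun m _ hm ↦ by
    rw [Nat.choose_eq_zero_of_lt (by rw [mem_range] at hm; omega)]; simp]
  have := congrArg (Int.cast : ℤ → R) (Int.alternating_sum_range_choose_mul_choose i j)
  push_cast at this
  exact this

theorem Delta_rev_apply {n : ℕ} (μ : ℂ) (i j : Fin n) :
    Delta n μ i.rev j = μ ^ (n - i) * (-μ) ^ (j : ℕ) * ((j : ℕ).choose i : ℂ) := by
  have hi := i.isLt
  simp only [Delta, of_apply, Fin.val_rev]
  rw [show n - (n - (i + 1) + 1) = i by omega, show n - (i + 1) + 1 = n - i by omega]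

theorem Delta_submatrix_rev_mul_Delta {n : ℕ} {μ : ℂ} (hμ : μ ^ (2 * n) = 1) :
    (Delta n μ).submatrix Fin.rev Fin.rev * Delta n μ = 1 := by
  ext i j
  rw [mul_apply, ← Equiv.sum_comp Fin.revPerm]
  have hterm (m : Fin n) :
      Delta n μ i.rev m * Delta n μ m.rev j =
        μ ^ (n - i) * μ ^ n * (-μ) ^ (j : ℕ) *
          ((-1) ^ (m : ℕ) * ((j : ℕ).choose m * (m : ℕ).choose i : ℂ)) := by
    rw [Delta_rev_apply, Delta_rev_apply, neg_pow μ (m : ℕ), ← pow_sub_mul_pow μ m.isLt.le]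
    ring
  simp only [submatrix_apply, Fin.revPerm_apply, Fin.rev_rev, hterm, ← mul_sum]
  rw [Fin.sum_univ_eq_sum_range (fun m ↦ (-1) ^ m * ((j : ℕ).choose m * m.choose i : ℂ)),
    sum_range_neg_one_pow_mul_choose_mul_choose j.isLt]
  rcases eq_or_ne i j with rfl | hij
  · rw [if_pos rfl, one_apply_eq, neg_pow]
    calc μ ^ (n - i) * μ ^ n * ((-1) ^ (i : ℕ) * μ ^ (i : ℕ)) * (-1) ^ (i : ℕ)
        = μ ^ (n - i) * μ ^ (i : ℕ) * μ ^ n * ((-1) ^ (i : ℕ) * (-1) ^ (i : ℕ)) := by ring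
      _ = μ ^ (2 * n) := by
        rw [pow_sub_mul_pow μ i.isLt.le, ← pow_add, ← mul_pow]
        simp [two_mul]
      _ = 1 := hμ
  · rw [if_neg (Fin.val_ne_of_ne hij), one_apply_ne hij, mul_zero]

theorem stmt_2_general (n : ℕ) (μ : ℂ) (hμ : μ = (-1) ^ n) :
    (Matrix.of fun i j : Fin n => Delta n μ i.rev j.rev) * Delta n μ = 1 ∧
      IsUnit (Delta n μ) ∧
      (Delta n μ)⁻¹ = Matrix.of fun i j : Fin n => Delta n μ i.rev j.rev := by
  have hμ2n : μ ^ (2 * n) = 1 := by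
    rw [hμ, ← pow_mul, ((even_two_mul n).mul_left n).neg_one_pow]
  have hinv : (Delta n μ).submatrix Fin.rev Fin.rev * Delta n μ = 1 :=
    Delta_submatrix_rev_mul_Delta hμ2n
  exact ⟨hinv, IsUnit.of_mul_eq_one_right _ hinv, inv_eq_left_inv hinv⟩

/-- the central reflection of `Δ_n` is a (two-sided) inverse of `Δ_n`. -/
theorem stmt_2 (n : ℕ) (hn : 1 ≤ n) (μ : ℂ) (hμ : μ = (-1) ^ n) :
    (Matrix.of fun i j : Fin n => Delta n μ i.rev j.rev) * Delta n μ = 1 ∧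
      IsUnit (Delta n μ) ∧
      (Delta n μ)⁻¹ = Matrix.of fun i j : Fin n => Delta n μ i.rev j.rev :=
  stmt_2_general n μ hμ
end
end

section
/- Let n ≥ 1, let μ = (-1)^n, and let Δ_n be the n×n complex matrix with (i,j) entry μ^i·(−μ)^{j−1}·C(j−1, n−i) for 1 ≤ i, j ≤ n. Then for every integer ℓ with 0 ≤ ℓ ≤ n, the identity (Δ_n · J_n(μ)^ℓ)ᵀ = −Δ_n · J_n(μ)^{n−ℓ} holds. -/
open Matrix BigOperators Finset

noncomputable section

/-!
Pascal's rule for the binomial coefficients in `Δ = Δ_n` gives `Jᵀ Δ J = Δ` for `J = J_n(μ)`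
whenever `μ² = 1`. Hence `(Δ J^(ℓ+1))ᵀ = Jᵀ (Δ J^ℓ)ᵀ = -(Jᵀ Δ J) J^(n-ℓ-1)`, and the identity
propagates from `ℓ` to `ℓ + 1`. The base case `Δᵀ = -Δ J^n` is an entrywise computation: the
entries of `J^n` are binomial coefficients, and for `n = m + 1` each entry of `Δ J^n` becomes
the alternating convolution `∑ⱼ (-1)^j C(j, a) C(m+1, k-j) = (-1)^a C(m-a, m-k)`, the
coefficient of `x^k` in `(1+x)^(m+1) · (-x)^a / (1+x)^(a+1)`.
-/

open Matrix Finset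

theorem sum_range_neg_one_pow_mul_choose_mul_choose_s3 {m a k : ℕ} (ha : a ≤ m) (hk : k ≤ m) :
    ∑ j ∈ range (k + 1), (-1 : ℤ) ^ j * (j.choose a * (m + 1).choose (k - j))
      = (-1) ^ a * (m - a).choose (m - k) := by
  induction k generalizing a with
  | zero =>
    cases a with
    | zero => simp
    | succ b => simp [Nat.choose_eq_zero_of_lt (show m - (b + 1) < m by omega)]
  | succ k ih =>
    rw [sum_range_succ']
    simp only [Nat.add_sub_add_right]
    cases a with
    | zero =>
      have hsum := ih (Nat.zero_le m) (by omega)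
      simp only [Nat.choose_zero_right, Nat.cast_one, one_mul, pow_succ, mul_neg_one, neg_mul,
        sum_neg_distrib, pow_zero, Nat.sub_zero] at hsum ⊢
      rw [hsum, Nat.choose_symm hk, Nat.choose_symm (Nat.le_of_succ_le hk), Nat.choose_succ_succ]
      push_cast; ring
    | succ b =>
      have hpascal : ∀ j ∈ range (k + 1),
          (-1 : ℤ) ^ (j + 1) * ((j + 1).choose (b + 1) * (m + 1).choose (k - j))
            = -((-1) ^ j * (j.choose b * (m + 1).choose (k - j)))
              - (-1) ^ j * (j.choose (b + 1) * (m + 1).choose (k - j)) := fun j _ => by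
        rw [Nat.choose_succ_succ]; push_cast; ring
      rw [sum_congr rfl hpascal, sum_sub_distrib, sum_neg_distrib, ih (by omega) (by omega),
        ih ha (by omega), Nat.choose_zero_succ, show m - b = m - (b + 1) + 1 by omega,
        show m - k = m - (k + 1) + 1 by omega, Nat.choose_succ_succ]
      push_cast; ring

theorem Fin.val_eq_zero_or_exists_val_eq_succ {n : ℕ} (k : Fin n) :
    (k : ℕ) = 0 ∨ ∃ k' : Fin n, (k : ℕ) = k' + 1 := by
  rcases Nat.eq_zero_or_pos k with hk | hk
  · exact Or.inl hk
  · exact Or.inr ⟨⟨k - 1, by omega⟩, by simp; omega⟩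

section Jordan

variable {n : ℕ} {μ : ℂ}

theorem mul_Jmat_apply_of_val_eq_zero (A : Matrix (Fin n) (Fin n) ℂ) (i : Fin n) {k : Fin n}
    (hk : (k : ℕ) = 0) : (A * Jmat n μ) i k = μ * A i k := by
  rw [mul_apply, Fintype.sum_eq_single k fun j hj => ?_]
  · simp [Jmat, mul_comm]
  · simp [Jmat, hj, hk]

theorem mul_Jmat_apply_of_val_eq_succ (A : Matrix (Fin n) (Fin n) ℂ) (i : Fin n) {k k' : Fin n}
    (hk : (k : ℕ) = k' + 1) : (A * Jmat n μ) i k = μ * A i k + A i k' := by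
  have hne : k ≠ k' := fun h => by simp [h] at hk
  rw [mul_apply, Fintype.sum_eq_add k k' hne fun j hj => ?_]
  · simp [Jmat, hne.symm, hk, mul_comm]
  · have hjk' : (k : ℕ) ≠ j + 1 := fun h => hj.2 (Fin.ext (by omega))
    simp [Jmat, hj.1, hjk']

theorem Jmat_transpose_mul_apply_of_val_eq_zero (A : Matrix (Fin n) (Fin n) ℂ) {i : Fin n}
    (k : Fin n) (hi : (i : ℕ) = 0) : ((Jmat n μ)ᵀ * A) i k = μ * A i k := by
  rw [← transpose_apply (_ * A), transpose_mul, transpose_transpose,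
    mul_Jmat_apply_of_val_eq_zero _ _ hi, transpose_apply]

theorem Jmat_transpose_mul_apply_of_val_eq_succ (A : Matrix (Fin n) (Fin n) ℂ) {i i' : Fin n}
    (k : Fin n) (hi : (i : ℕ) = i' + 1) : ((Jmat n μ)ᵀ * A) i k = μ * A i k + A i' k := by
  rw [← transpose_apply (_ * A), transpose_mul, transpose_transpose,
    mul_Jmat_apply_of_val_eq_succ _ _ hi, transpose_apply, transpose_apply]

theorem Jmat_pow_apply (ℓ : ℕ) (i k : Fin n) :
    (Jmat n μ ^ ℓ) i k =
      if (i : ℕ) ≤ k then μ ^ (ℓ - (k - i)) * (ℓ.choose (k - i) : ℂ) else 0 := by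
  induction ℓ generalizing k with
  | zero =>
    rw [pow_zero, one_apply]
    by_cases hik : i = k
    · simp [hik]
    · have hki : (i : ℕ) ≤ k → 0 < (k : ℕ) - i := fun h => by have := Fin.val_ne_of_ne hik; omega
      split_ifs with h <;> simp_all [Nat.choose_eq_zero_of_lt]
  | succ ℓ ih =>
    rw [pow_succ]
    obtain hk | ⟨k', hk⟩ := Fin.val_eq_zero_or_exists_val_eq_succ k
    · rw [mul_Jmat_apply_of_val_eq_zero _ _ hk, ih]
      split_ifs with hik
      · rw [show (k : ℕ) - i = 0 by omega]
        simp [pow_succ, mul_comm]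
      · rw [mul_zero]
    · rw [mul_Jmat_apply_of_val_eq_succ _ _ hk, ih, ih]
      rcases lt_trichotomy (i : ℕ) k with hik | hik | hik
      · obtain ⟨d, hd, hd'⟩ : ∃ d, (k : ℕ) - i = d + 1 ∧ (k' : ℕ) - i = d := ⟨k' - i, by omega, rfl⟩
        rw [if_pos hik.le, if_pos hik.le, if_pos (by omega), hd, hd', Nat.choose_succ_succ']
        rcases lt_or_ge d ℓ with hdℓ | hdℓ
        · rw [Nat.add_sub_add_right, show ℓ - d = ℓ - (d + 1) + 1 by omega]
          push_cast; ring
        · rw [Nat.choose_eq_zero_of_lt (show ℓ < d + 1 by omega),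
            show ℓ + 1 - (d + 1) = ℓ - d by omega]
          push_cast; ring
      · rw [if_pos hik.le, if_pos hik.le, if_neg (by omega), hik, Nat.sub_self]
        simp [pow_succ, mul_comm]
      · rw [if_neg (by omega), if_neg (by omega), if_neg (by omega)]
        ring

theorem Delta_apply_eq_zero_of_lt {i j : Fin n} (h : (j : ℕ) + i + 1 < n) : Delta n μ i j = 0 := by
  simp [Delta, Nat.choose_eq_zero_of_lt (show (j : ℕ) < n - (i + 1) by omega)]

theorem Jmat_transpose_mul_Delta_mul_Jmat (hμ : μ ^ 2 = 1) :
    (Jmat n μ)ᵀ * Delta n μ * Jmat n μ = Delta n μ := by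
  ext i k
  obtain hk | ⟨k', hk⟩ := Fin.val_eq_zero_or_exists_val_eq_succ k <;>
    obtain hi | ⟨i', hi⟩ := Fin.val_eq_zero_or_exists_val_eq_succ i
  · rw [mul_Jmat_apply_of_val_eq_zero _ _ hk, Jmat_transpose_mul_apply_of_val_eq_zero _ _ hi]
    linear_combination Delta n μ i k * hμ
  · rw [mul_Jmat_apply_of_val_eq_zero _ _ hk, Jmat_transpose_mul_apply_of_val_eq_succ _ _ hi,
      Delta_apply_eq_zero_of_lt (i := i') (by omega)]
    linear_combination Delta n μ i k * hμ
  · rw [mul_Jmat_apply_of_val_eq_succ _ _ hk, Jmat_transpose_mul_apply_of_val_eq_zero _ _ hi,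
      Jmat_transpose_mul_apply_of_val_eq_zero _ _ hi,
      Delta_apply_eq_zero_of_lt (j := k') (by omega)]
    linear_combination Delta n μ i k * hμ
  · rw [mul_Jmat_apply_of_val_eq_succ _ _ hk, Jmat_transpose_mul_apply_of_val_eq_succ _ _ hi,
      Jmat_transpose_mul_apply_of_val_eq_succ _ _ hi]
    obtain ⟨m, hm, hm'⟩ : ∃ m, n - ((i' : ℕ) + 1) = m + 1 ∧ n - ((i' : ℕ) + 1 + 1) = m :=
      ⟨n - (i' + 2), by omega, by omega⟩
    simp only [Delta, of_apply, hi, hk, hm, hm', Nat.choose_succ_succ']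
    push_cast
    linear_combination (μ ^ ((i' : ℕ) + 1 + 1) * (-μ) ^ ((k' : ℕ) + 1)
      * ((k' : ℕ) + 1).choose m
      - μ ^ ((i' : ℕ) + 1) * (-μ) ^ (k' : ℕ) * (k' : ℕ).choose (m + 1)) * hμ

theorem Delta_mul_Jmat_pow_self_apply (hμ : μ = (-1) ^ n) (i k : Fin n) :
    (Delta n μ * Jmat n μ ^ n) i k = μ ^ ((i : ℕ) + k) *
      ∑ j ∈ range ((k : ℕ) + 1), (-1 : ℂ) ^ j * (j.choose (n - (i + 1)) * n.choose (k - j)) := by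
  have hterm : ∀ j : Fin n, Delta n μ i j * (Jmat n μ ^ n) j k = μ ^ ((i : ℕ) + k) *
      if (j : ℕ) ≤ k then (-1 : ℂ) ^ (j : ℕ) * ((j : ℕ).choose (n - (i + 1)) * n.choose (k - j))
      else 0 := fun j => by
    rw [Jmat_pow_apply]
    split_ifs with hjk
    · simp only [Delta, of_apply]
      rcases Nat.even_or_odd n with hn | hn
      · rw [hμ, hn.neg_one_pow]
        simp [mul_assoc]
      · rw [hμ, hn.neg_one_pow, neg_neg, one_pow, mul_one]
        have hsign : (-1 : ℂ) ^ ((i : ℕ) + 1) * (-1) ^ (n - (k - j))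
            = (-1) ^ ((i : ℕ) + k) * (-1) ^ (j : ℕ) := by
          rw [← pow_add, ← pow_add, neg_one_pow_congr]
          have := Nat.odd_iff.mp hn
          rw [Nat.even_iff, Nat.even_iff]
          omega
        linear_combination ((j : ℕ).choose (n - (i + 1)) * n.choose (k - j) : ℂ) * hsign
    · rw [mul_zero, mul_zero]
  rw [mul_apply, Fintype.sum_congr _ _ hterm, ← mul_sum, Fin.sum_univ_eq_sum_range (fun j =>
      if j ≤ (k : ℕ) then (-1 : ℂ) ^ j * (j.choose (n - (i + 1)) * n.choose (k - j)) else 0),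
    ← sum_filter]
  congr 2
  ext j
  simp only [mem_filter, mem_range]
  omega

theorem Delta_transpose (hμ : μ = (-1) ^ n) : (Delta n μ)ᵀ = -(Delta n μ * Jmat n μ ^ n) := by
  ext i k
  obtain ⟨m, rfl⟩ : ∃ m, n = m + 1 := ⟨n - 1, by have := i.pos; omega⟩
  have hsum := sum_range_neg_one_pow_mul_choose_mul_choose_s3 (m := m) (a := m - i) (k := k)
    (by omega) (by omega)
  rw [show m - (m - i) = i by omega] at hsum
  rw [transpose_apply, neg_apply, Delta_mul_Jmat_pow_self_apply hμ,
    show m + 1 - ((i : ℕ) + 1) = m - i by omega]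
  simp only [Delta, of_apply, show m + 1 - ((k : ℕ) + 1) = m - k by omega]
  rw [← Int.cast_inj (α := ℂ)] at hsum
  push_cast at hsum
  rw [hsum]
  have hsign : μ ^ ((k : ℕ) + 1) * (-μ) ^ (i : ℕ) = -(μ ^ ((i : ℕ) + k) * (-1) ^ (m - i)) := by
    rcases Nat.even_or_odd (m + 1) with hn | hn
    · have hparity : (-1 : ℂ) ^ (i : ℕ) = (-1) ^ (m - i + 1) := neg_one_pow_congr <| by
        have := Nat.even_iff.mp hn
        rw [Nat.even_iff, Nat.even_iff]
        omega
      rw [hμ, hn.neg_one_pow, hparity]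
      ring
    · have hparity : (-1 : ℂ) ^ ((k : ℕ) + 1) = (-1) ^ ((i : ℕ) + k + (m - i) + 1) :=
        neg_one_pow_congr <| by
          have := Nat.odd_iff.mp hn
          rw [Nat.even_iff, Nat.even_iff]
          omega
      rw [hμ, hn.neg_one_pow, neg_neg, hparity]
      ring
  linear_combination ((i : ℕ).choose (m - k) : ℂ) * hsign

end Jordan

theorem stmt_3_general (n : ℕ) (μ : ℂ) (hμ : μ = (-1) ^ n) :
    ∀ ℓ : ℕ, ℓ ≤ n →
      (Delta n μ * (Jmat n μ) ^ ℓ)ᵀ = -(Delta n μ * (Jmat n μ) ^ (n - ℓ)) := by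
  have hμ2 : μ ^ 2 = 1 := by rw [hμ, ← pow_mul, pow_mul', neg_one_sq, one_pow]
  intro ℓ
  induction ℓ with
  | zero => simpa using Delta_transpose hμ
  | succ ℓ ih =>
    intro hℓ
    obtain ⟨r, hr, hr'⟩ : ∃ r, n - ℓ = r + 1 ∧ n - (ℓ + 1) = r := ⟨n - (ℓ + 1), by omega, rfl⟩
    calc (Delta n μ * Jmat n μ ^ (ℓ + 1))ᵀ = (Jmat n μ)ᵀ * (Delta n μ * Jmat n μ ^ ℓ)ᵀ := by
          rw [pow_succ, ← mul_assoc, transpose_mul]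
      _ = -((Jmat n μ)ᵀ * Delta n μ * Jmat n μ * Jmat n μ ^ r) := by
          simp only [ih (by omega), hr, pow_succ', mul_neg, mul_assoc]
      _ = -(Delta n μ * Jmat n μ ^ (n - (ℓ + 1))) := by
          rw [Jmat_transpose_mul_Delta_mul_Jmat hμ2, hr']

/-- `(Δ_n · J_n(μ)^ℓ)ᵀ = −Δ_n · J_n(μ)^(n−ℓ)` for `0 ≤ ℓ ≤ n`, `μ = (-1)^n`. -/
theorem stmt_3 (n : ℕ) (hn : 1 ≤ n) (μ : ℂ) (hμ : μ = (-1) ^ n) :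
    ∀ ℓ : ℕ, ℓ ≤ n →
      (Delta n μ * (Jmat n μ) ^ ℓ)ᵀ = -(Delta n μ * (Jmat n μ) ^ (n - ℓ)) :=
  stmt_3_general n μ hμ
end
end

section
/- Let n ≥ 1 and let μ be a complex number with μ ≠ 0, μ ≠ 1, and μ ≠ −1. Then a 2n×2n complex matrix X satisfies X·H_{2n}(μ) + H_{2n}(μ)·Xᵀ = 0 if and only if X is the block-diagonal matrix (−Dᵀ) ⊕ D for some n×n matrix D that commutes with J_n(μ); that is, X has upper-left block −Dᵀ, lower-right block D, zero off-diagonal blocks, and D·J_n(μ) = J_n(μ)·D. -/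
/-!
Writing `X = [[A, B], [C, D]]`, the equation `X H + H Xᵀ = 0` splits into `A = -Dᵀ`,
`D J = J D`, `B J + Bᵀ = 0` and `C + J Cᵀ = 0`. The last two give the Stein equations
`Jᵀ B J = B` and `J C Jᵀ = C`; since `J = μ + N` with `N` nilpotent and `μ² ≠ 1`, these
force `B = C = 0`.
-/

open Matrix BigOperators Finset

noncomputable section

theorem Matrix.isNilpotent_of_isUpperTriangular_of_diag_eq_zero {n R : Type*} [Fintype n]
    [DecidableEq n] [LinearOrder n] [CommRing R] {M : Matrix n n R} (hM : M.IsUpperTriangular)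
    (hdiag : M.diag = 0) : IsNilpotent M := by
  refine ⟨Fintype.card n, ?_⟩
  have := aeval_self_charpoly M
  simpa [charpoly_of_isUpperTriangular M hM, show ∀ i, M i i = 0 from congrFun hdiag] using this

/-- Downward induction on `a + b` shows `Nᵃ M N'ᵇ = 0`, since multiplying the equation by
`Nᵃ` and `N'ᵇ` expresses `(1 - μ ν) Nᵃ M N'ᵇ` through terms of higher total degree. -/
theorem eq_zero_of_add_mul_mul_add_eq_self {K R : Type*} [Field K] [Ring R] [Algebra K R]
    {μ ν : K} (hμν : μ * ν ≠ 1) {N N' M : R} (hN : IsNilpotent N) (hN' : IsNilpotent N')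
    (hM : (μ • 1 + N) * M * (ν • 1 + N') = M) : M = 0 := by
  obtain ⟨k, hk⟩ := hN
  obtain ⟨k', hk'⟩ := hN'
  have expand : ∀ a b : ℕ, N ^ a * M * N' ^ b = (μ * ν) • (N ^ a * M * N' ^ b) +
      μ • (N ^ a * M * N' ^ (b + 1)) + ν • (N ^ (a + 1) * M * N' ^ b) +
      N ^ (a + 1) * M * N' ^ (b + 1) := by
    intro a b
    conv_lhs => rw [← hM]
    rw [pow_succ N, pow_succ' N']
    simp only [mul_add, add_mul, mul_smul_comm, smul_mul_assoc, mul_one, one_mul, mul_assoc]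
    module
  have key : ∀ m a b : ℕ, k + k' ≤ a + b + m → N ^ a * M * N' ^ b = 0 := by
    intro m
    induction m with
    | zero =>
      intro a b hab
      rcases le_or_gt k a with ha | ha
      · simp [pow_eq_zero_of_le ha hk]
      · simp [pow_eq_zero_of_le (show k' ≤ b by omega) hk']
    | succ m ih =>
      intro a b hab
      have h := expand a b
      rw [ih a (b + 1) (by omega), ih (a + 1) b (by omega), ih (a + 1) (b + 1) (by omega),
        smul_zero, smul_zero, add_zero, add_zero, add_zero] at h
      have h1 : (1 - μ * ν) • (N ^ a * M * N' ^ b) = 0 := by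
        rw [sub_smul, one_smul, ← h, sub_self]
      exact (smul_eq_zero.mp h1).resolve_left (sub_ne_zero.mpr hμν.symm)
  simpa using key (k + k') 0 0 (by omega)

theorem Jmat_eq_smul_one_add (n : ℕ) (μ : ℂ) : Jmat n μ = μ • 1 + Jmat n 0 := by
  ext i j
  by_cases hij : i = j <;> simp [Jmat, one_apply, hij]

theorem isNilpotent_Jmat_zero (n : ℕ) : IsNilpotent (Jmat n 0) := by
  refine isNilpotent_of_isUpperTriangular_of_diag_eq_zero (fun i j (hji : j < i) => ?_) ?_
  · have : (j : ℕ) ≠ i + 1 := by omega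
    simp [Jmat, hji.ne', this]
  · ext i
    simp [Jmat]

theorem eq_zero_of_mul_Jmat_add_transpose_eq_zero {n : ℕ} {μ : ℂ} (hμ : μ ^ 2 ≠ 1)
    {B : Matrix (Fin n) (Fin n) ℂ} (h : B * Jmat n μ + Bᵀ = 0) : B = 0 := by
  have hBJ : B * Jmat n μ = -Bᵀ := eq_neg_of_add_eq_zero_left h
  refine eq_zero_of_add_mul_mul_add_eq_self (μ := μ) (ν := μ) (by rwa [← sq])
    (isNilpotent_transpose_iff.mpr (isNilpotent_Jmat_zero n)) (isNilpotent_Jmat_zero n) ?_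
  calc (μ • 1 + (Jmat n 0)ᵀ) * B * (μ • 1 + Jmat n 0)
      = (Jmat n μ)ᵀ * (B * Jmat n μ) := by
        rw [Jmat_eq_smul_one_add n μ, transpose_add, transpose_smul, transpose_one,
          Matrix.mul_assoc]
    _ = B := by
        rw [hBJ, Matrix.mul_neg, ← transpose_mul, hBJ, transpose_neg, transpose_transpose, neg_neg]

theorem eq_zero_of_add_Jmat_mul_transpose_eq_zero {n : ℕ} {μ : ℂ} (hμ : μ ^ 2 ≠ 1)
    {C : Matrix (Fin n) (Fin n) ℂ} (h : C + Jmat n μ * Cᵀ = 0) : C = 0 := by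
  have hJC : Jmat n μ * Cᵀ = -C := eq_neg_of_add_eq_zero_right h
  refine eq_zero_of_add_mul_mul_add_eq_self (μ := μ) (ν := μ) (by rwa [← sq])
    (isNilpotent_Jmat_zero n) (isNilpotent_transpose_iff.mpr (isNilpotent_Jmat_zero n)) ?_
  calc (μ • 1 + Jmat n 0) * C * (μ • 1 + (Jmat n 0)ᵀ)
      = Jmat n μ * (Jmat n μ * Cᵀ)ᵀ := by
        rw [Jmat_eq_smul_one_add n μ, transpose_mul, transpose_transpose, transpose_add,
          transpose_smul, transpose_one, Matrix.mul_assoc]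
    _ = C := by rw [hJC, transpose_neg, Matrix.mul_neg, hJC, neg_neg]

theorem fromBlocks_mul_Hmat_add_Hmat_mul_transpose (n : ℕ) (μ : ℂ)
    (A B C D : Matrix (Fin n) (Fin n) ℂ) :
    fromBlocks A B C D * Hmat n μ + Hmat n μ * (fromBlocks A B C D)ᵀ =
      fromBlocks (B * Jmat n μ + Bᵀ) (A + Dᵀ) (D * Jmat n μ + Jmat n μ * Aᵀ)
        (C + Jmat n μ * Cᵀ) := by
  simp [Hmat, fromBlocks_transpose, fromBlocks_multiply, fromBlocks_add]

theorem stmt_9_general (n : ℕ) (μ : ℂ) (hμ1 : μ ≠ 1) (hμ2 : μ ≠ -1)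
    (X : Matrix (Fin n ⊕ Fin n) (Fin n ⊕ Fin n) ℂ) :
    X * Hmat n μ + Hmat n μ * Xᵀ = 0 ↔
      ∃ D : Matrix (Fin n) (Fin n) ℂ,
        D * Jmat n μ = Jmat n μ * D ∧ X = Matrix.fromBlocks (-Dᵀ) 0 0 D := by
  have hμ : μ ^ 2 ≠ 1 := sq_ne_one_iff.mpr ⟨hμ1, hμ2⟩
  obtain ⟨A, B, C, D, rfl⟩ : ∃ A B C D, X = fromBlocks A B C D :=
    ⟨_, _, _, _, (fromBlocks_toBlocks X).symm⟩
  rw [fromBlocks_mul_Hmat_add_Hmat_mul_transpose, ← fromBlocks_zero, fromBlocks_inj]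
  constructor
  · rintro ⟨hB, hAD, hDA, hC⟩
    have hA : A = -Dᵀ := eq_neg_of_add_eq_zero_left hAD
    refine ⟨D, ?_, by rw [hA, eq_zero_of_mul_Jmat_add_transpose_eq_zero hμ hB,
      eq_zero_of_add_Jmat_mul_transpose_eq_zero hμ hC]⟩
    rw [hA, transpose_neg, transpose_transpose, Matrix.mul_neg] at hDA
    exact add_neg_eq_zero.mp hDA
  · rintro ⟨D', hD', hX⟩
    obtain ⟨rfl, rfl, rfl, rfl⟩ := fromBlocks_inj.mp hX
    simp [hD']

/-- for `μ ∉ {0, 1, −1}`, the solutions of `X·H + H·Xᵀ = 0` are exactly the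
matrices `(−Dᵀ) ⊕ D` where `D` commutes with `J_n(μ)`. -/
theorem stmt_9 (n : ℕ) (hn : 1 ≤ n) (μ : ℂ) (hμ0 : μ ≠ 0) (hμ1 : μ ≠ 1) (hμ2 : μ ≠ -1)
    (X : Matrix (Fin n ⊕ Fin n) (Fin n ⊕ Fin n) ℂ) :
    X * Hmat n μ + Hmat n μ * Xᵀ = 0 ↔
      ∃ D : Matrix (Fin n) (Fin n) ℂ,
        D * Jmat n μ = Jmat n μ * D ∧ X = Matrix.fromBlocks (-Dᵀ) 0 0 D :=
  stmt_9_general n μ hμ1 hμ2 X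
end
end

section
/- Let n ≥ 1, let μ = (-1)^n, and let Δ_n be the n×n complex matrix with (i,j) entry μ^i·(−μ)^{j−1}·C(j−1, n−i) for 1 ≤ i, j ≤ n. Then for every integer ℓ with 0 ≤ ℓ ≤ n−1, the matrix B = Δ_n·(J_n(μ)^ℓ + J_n(μ)^{n−1−ℓ}) satisfies B·J_n(μ) + Bᵀ = 0. -/
open Matrix BigOperators Finset

noncomputable section

lemma negpow (a b : ℕ) (h : a % 2 = b % 2) : (-1:ℂ)^a = (-1)^b := by
  conv_lhs => rw [← Nat.div_add_mod a 2]
  conv_rhs => rw [← Nat.div_add_mod b 2]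
  rw [pow_add, pow_add, pow_mul, pow_mul, h]
  norm_num

lemma alt_sum (n : ℕ) (hn : 1 ≤ n) : ∀ j : ℕ,
    ∑ k ∈ Finset.range (j+1), (-1:ℂ)^k * ((n.choose (j-k) : ℕ) : ℂ)
      = (((n-1).choose j : ℕ) : ℂ) := by
  intro j
  induction j with
  | zero => simp
  | succ j ih =>
    rw [Finset.sum_range_succ']
    have h1 : ∀ k ∈ Finset.range (j+1), (-1:ℂ)^(k+1) * ((n.choose (j+1-(k+1)) : ℕ) : ℂ)
        = -((-1:ℂ)^k * ((n.choose (j-k) : ℕ) : ℂ)) := by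
      intro k hk
      have : j + 1 - (k+1) = j - k := by omega
      rw [this, pow_succ]; ring
    rw [Finset.sum_congr rfl h1, Finset.sum_neg_distrib, ih]
    have hp : n.choose (j+1) = (n-1).choose j + (n-1).choose (j+1) := by
      have h2 := Nat.choose_succ_succ (n-1) j
      simp only [Nat.succ_eq_add_one] at h2
      rw [show n - 1 + 1 = n by omega] at h2
      exact h2
    simp only [Nat.sub_zero, pow_zero, one_mul]
    rw [hp]
    push_cast
    ring

lemma key_sum (n : ℕ) : ∀ j a : ℕ, a < n →
    ∑ k ∈ Finset.range (j+1), (-1:ℂ)^k * ((k.choose a : ℕ) : ℂ) * ((n.choose (j-k) : ℕ) : ℂ)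
      = (-1)^a * (if a ≤ j then (((n-1-a).choose (j-a) : ℕ) : ℂ) else 0) := by
  intro j
  induction j with
  | zero =>
    intro a ha
    rcases a with _ | b
    · simp
    · simp [Nat.choose_eq_zero_of_lt (show 0 < b+1 by omega)]
  | succ j ih =>
    intro a ha
    rcases a with _ | b
    · -- a = 0
      have h1 : ∀ k ∈ Finset.range (j+2), (-1:ℂ)^k * ((k.choose 0 : ℕ) : ℂ) * ((n.choose (j+1-k) : ℕ) : ℂ)
          = (-1:ℂ)^k * ((n.choose (j+1-k) : ℕ) : ℂ) := by
        intro k hk; simp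
      rw [Finset.sum_congr rfl h1, alt_sum n (by omega) (j+1)]
      simp
    · -- a = b+1
      have hb : b < n := by omega
      have h1 := ih b hb
      have h2 := ih (b+1) ha
      rw [Finset.sum_range_succ']
      have h3 : ∀ k ∈ Finset.range (j+1),
          (-1:ℂ)^(k+1) * (((k+1).choose (b+1) : ℕ) : ℂ) * ((n.choose (j+1-(k+1)) : ℕ) : ℂ)
          = -((-1:ℂ)^k * ((k.choose b : ℕ) : ℂ) * ((n.choose (j-k) : ℕ) : ℂ))
            + -((-1:ℂ)^k * ((k.choose (b+1) : ℕ) : ℂ) * ((n.choose (j-k) : ℕ) : ℂ)) := by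
        intro k hk
        rw [show j+1-(k+1) = j - k by omega, Nat.choose_succ_succ, pow_succ]
        push_cast; ring
      rw [Finset.sum_congr rfl h3, Finset.sum_add_distrib, Finset.sum_neg_distrib,
        Finset.sum_neg_distrib, h1, h2]
      simp only [Nat.choose_eq_zero_of_lt (show 0 < b+1 by omega)]
      by_cases hb1 : b + 1 ≤ j
      · -- main case
        rw [if_pos (by omega), if_pos hb1, if_pos (by omega)]
        have hp : (n-1-b).choose (j-b) = (n-1-(b+1)).choose (j-(b+1)) + (n-1-(b+1)).choose (j-b) := by
          have h4 := Nat.choose_succ_succ (n-1-(b+1)) (j-(b+1))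
          simp only [Nat.succ_eq_add_one] at h4
          rw [show n-1-(b+1)+1 = n-1-b by omega, show j-(b+1)+1 = j-b by omega] at h4
          exact h4
        rw [show j + 1 - (b+1) = j - b by omega, hp]
        push_cast; ring
      · by_cases hb0 : b ≤ j
        · -- b = j
          have hbj : b = j := by omega
          rw [if_pos hb0, if_neg hb1, if_pos (by omega)]
          rw [show j - b = 0 by omega, show j + 1 - (b+1) = 0 by omega]
          simp; ring
        · rw [if_neg hb0, if_neg hb1, if_neg (by omega)]
          simp

def Nmat (n : ℕ) : Matrix (Fin n) (Fin n) ℂ :=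
  Matrix.of fun i j => if (j:ℕ) = (i:ℕ) + 1 then 1 else 0

lemma Jmat_eq (n : ℕ) (μ : ℂ) : Jmat n μ = μ • (1 : Matrix (Fin n) (Fin n) ℂ) + Nmat n := by
  ext i j
  simp only [Jmat, Nmat, Matrix.of_apply, Matrix.add_apply, Matrix.smul_apply, Matrix.one_apply,
    smul_eq_mul]
  by_cases h : i = j
  · subst h; simp [show ¬((i:ℕ) = (i:ℕ)+1) by omega]
  · simp [h]

lemma mul_Nmat_apply (n : ℕ) (A : Matrix (Fin n) (Fin n) ℂ) (i j : Fin n) :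
    (A * Nmat n) i j = if h : 0 < (j:ℕ) then A i ⟨(j:ℕ)-1, lt_of_le_of_lt (Nat.sub_le _ _) j.isLt⟩ else 0 := by
  rw [Matrix.mul_apply]
  split_ifs with h
  · rw [Finset.sum_eq_single (⟨(j:ℕ)-1, lt_of_le_of_lt (Nat.sub_le _ _) j.isLt⟩ : Fin n)]
    · simp only [Nmat, Matrix.of_apply]
      rw [if_pos (show (j:ℕ) = ((j:ℕ)-1)+1 by omega), mul_one]
    · intro b _ hb
      have : ¬ ((j:ℕ) = (b:ℕ) + 1) := by
        intro hc
        exact hb (Fin.ext (by simp; omega))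
      simp [Nmat, this]
    · intro hc; exact absurd (Finset.mem_univ _) hc
  · apply Finset.sum_eq_zero
    intro k _
    have : ¬ ((j:ℕ) = (k:ℕ) + 1) := by omega
    simp [Nmat, this]

lemma mul_Npow_apply (n t : ℕ) (A : Matrix (Fin n) (Fin n) ℂ) (i : Fin n) : ∀ j : Fin n,
    (A * (Nmat n)^t) i j = if h : t ≤ (j:ℕ) then A i ⟨(j:ℕ)-t, lt_of_le_of_lt (Nat.sub_le _ _) j.isLt⟩ else 0 := by
  induction t with
  | zero => intro j; simp
  | succ t ih =>
    intro j
    rw [pow_succ, ← mul_assoc, mul_Nmat_apply]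
    by_cases h1 : 0 < (j:ℕ)
    · rw [dif_pos h1, ih]
      by_cases h2 : t + 1 ≤ (j:ℕ)
      · rw [dif_pos (show t ≤ (j:ℕ)-1 by omega), dif_pos h2]
        congr 1
        exact Fin.ext (by simp; omega)
      · rw [dif_neg (show ¬ t ≤ (j:ℕ)-1 by omega), dif_neg h2]
    · rw [dif_neg h1, dif_neg (show ¬ (t+1 ≤ (j:ℕ)) by omega)]

lemma Nt_mul_apply (n : ℕ) (A : Matrix (Fin n) (Fin n) ℂ) (i j : Fin n) :
    ((Nmat n)ᵀ * A) i j = if h : 0 < (i:ℕ) then A ⟨(i:ℕ)-1, lt_of_le_of_lt (Nat.sub_le _ _) i.isLt⟩ j else 0 := by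
  have h0 : (Nmat n)ᵀ * A = (Aᵀ * Nmat n)ᵀ := by
    rw [Matrix.transpose_mul, Matrix.transpose_transpose]
  rw [h0, Matrix.transpose_apply, mul_Nmat_apply]
  split_ifs <;> rfl

lemma lemB (n : ℕ) (hn : 1 ≤ n) (μ : ℂ) (hμ : μ = (-1)^n) :
    (Jmat n μ)ᵀ * Delta n μ * Jmat n μ = Delta n μ := by
  have hμ2 : μ^2 = 1 := by rw [hμ, ← pow_mul, mul_comm, pow_mul]; norm_num
  have hzero : μ • ((Nmat n)ᵀ * Delta n μ) + μ • (Delta n μ * Nmat n)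
      + (Nmat n)ᵀ * Delta n μ * Nmat n = 0 := by
    ext i j
    have hilt := i.isLt
    have hjlt := j.isLt
    have e3 : (Nmat n)ᵀ * Delta n μ * Nmat n = (Nmat n)ᵀ * (Delta n μ * Nmat n) := by
      rw [mul_assoc]
    simp only [Matrix.add_apply, Matrix.smul_apply, Matrix.zero_apply, smul_eq_mul, e3,
      Nt_mul_apply, mul_Nmat_apply]
    by_cases hi : 0 < (i:ℕ) <;> by_cases hj : 0 < (j:ℕ)
    · rw [dif_pos hi, dif_pos hj, dif_pos hi, dif_pos hj]
      obtain ⟨a', ha'⟩ : ∃ a', (i:ℕ) = a'+1 := ⟨(i:ℕ)-1, by omega⟩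
      obtain ⟨b', hb'⟩ : ∃ b', (j:ℕ) = b'+1 := ⟨(j:ℕ)-1, by omega⟩
      simp only [Delta, Matrix.of_apply, ha', hb', Nat.add_sub_cancel]
      have hP : (((b'+1).choose (n-(a'+1)) : ℕ) : ℂ)
          = ((b'.choose (n-(a'+2)) : ℕ) : ℂ) + ((b'.choose (n-(a'+1)) : ℕ) : ℂ) := by
        have h4 := Nat.choose_succ_succ b' (n-(a'+2))
        simp only [Nat.succ_eq_add_one] at h4
        rw [show n-(a'+2)+1 = n-(a'+1) by omega] at h4
        rw [h4]; push_cast; ring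
      linear_combination (μ^(a'+2) * (-μ)^(b'+1)) * hP
        - (μ^(a'+1) * (-μ)^(b') * ((b'.choose (n-(a'+1)) : ℕ) : ℂ)) * hμ2
    · rw [dif_pos hi, dif_neg hj, dif_pos hi, dif_neg hj]
      have hj0 : (j:ℕ) = 0 := by omega
      simp only [Delta, Matrix.of_apply, hj0]
      rw [Nat.choose_eq_zero_of_lt (by simp; omega)]
      simp
    · rw [dif_neg hi, dif_pos hj, dif_neg hi]
      have hi0 : (i:ℕ) = 0 := by omega
      simp only [Delta, Matrix.of_apply, hi0]
      rw [Nat.choose_eq_zero_of_lt (by simp; omega)]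
      simp
    · rw [dif_neg hi, dif_neg hj, dif_neg hi]
      simp
  have expand : (Jmat n μ)ᵀ * Delta n μ * Jmat n μ
      = (μ^2) • Delta n μ + (μ • ((Nmat n)ᵀ * Delta n μ) + μ • (Delta n μ * Nmat n)
      + (Nmat n)ᵀ * Delta n μ * Nmat n) := by
    rw [Jmat_eq]
    simp only [Matrix.transpose_add, Matrix.transpose_smul, Matrix.transpose_one, add_mul,
      mul_add, smul_mul_assoc, mul_smul_comm, one_mul, mul_one, smul_add, smul_smul, ← pow_two]
    abel
  rw [expand, hzero, add_zero, hμ2, one_smul]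

lemma Jpow_expand (n m : ℕ) (μ : ℂ) :
    (Jmat n μ)^m = ∑ k ∈ Finset.range (m+1), (μ^k * (m.choose k : ℂ)) • (Nmat n)^(m-k) := by
  rw [Jmat_eq]
  have hc : Commute (μ • (1 : Matrix (Fin n) (Fin n) ℂ)) (Nmat n) := by
    unfold Commute SemiconjBy
    rw [smul_mul_assoc, one_mul, mul_smul_comm, mul_one]
  rw [hc.add_pow]
  apply Finset.sum_congr rfl
  intro k hk
  rw [smul_pow, one_pow, smul_mul_assoc, one_mul]
  rw [(Nat.cast_commute (m.choose k : ℕ) (μ ^ k • Nmat n ^ (m-k))).symm.eq]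
  rw [← nsmul_eq_mul, ← Nat.cast_smul_eq_nsmul ℂ, smul_smul, mul_comm]

lemma lemA (n : ℕ) (hn : 1 ≤ n) (μ : ℂ) (hμ : μ = (-1)^n) :
    (Delta n μ)ᵀ = -(Delta n μ * (Jmat n μ)^n) := by
  have hμ2 : μ^2 = 1 := by rw [hμ, ← pow_mul, mul_comm, pow_mul]; norm_num
  ext i j
  have hilt := i.isLt
  have hjlt := j.isLt
  rw [Matrix.transpose_apply, Matrix.neg_apply, Jpow_expand]
  rw [Finset.mul_sum, Matrix.sum_apply]
  have step1 : ∀ k ∈ Finset.range (n+1),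
      (Delta n μ * (μ^k * (n.choose k : ℂ)) • (Nmat n)^(n-k)) i j
      = (μ^k * (n.choose k : ℂ)) * ((Delta n μ * (Nmat n)^(n-k)) i j) := by
    intro k _
    rw [Matrix.mul_smul, Matrix.smul_apply, smul_eq_mul]
  rw [Finset.sum_congr rfl step1]
  set a : ℕ := n - ((i:ℕ)+1) with ha
  set g : ℕ → ℂ := fun t => if t ≤ (j:ℕ) then
      μ^((i:ℕ)+1) * (-μ)^((j:ℕ)-t) * ((((j:ℕ)-t).choose a : ℕ) : ℂ) else 0 with hg
  have step2 : ∀ k ∈ Finset.range (n+1),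
      (μ^k * (n.choose k : ℂ)) * ((Delta n μ * (Nmat n)^(n-k)) i j)
      = μ^k * (n.choose k : ℂ) * g (n-k) := by
    intro k _
    rw [mul_Npow_apply]
    by_cases h : n - k ≤ (j:ℕ)
    · rw [dif_pos h, hg]
      simp only [Delta, Matrix.of_apply]
      rw [if_pos h]
    · rw [dif_neg h, hg]
      simp only []
      rw [if_neg h, mul_zero]
  rw [Finset.sum_congr rfl step2]
  rw [← Finset.sum_range_reflect (fun k => μ^k * ((n.choose k : ℕ) : ℂ) * g (n-k)) (n+1)]
  have step3 : ∀ k ∈ Finset.range (n+1),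
      μ^(n+1-1-k) * ((n.choose (n+1-1-k) : ℕ) : ℂ) * g (n-(n+1-1-k))
      = μ^(n-k) * ((n.choose k : ℕ) : ℂ) * g k := by
    intro k hk
    rw [Finset.mem_range] at hk
    rw [show n+1-1-k = n-k by omega, Nat.choose_symm (by omega), show n - (n-k) = k by omega]
  rw [Finset.sum_congr rfl step3]
  rw [← Finset.sum_subset (Finset.range_subset_range.2 (show (j:ℕ)+1 ≤ n+1 by omega))
      (fun k _ hk2 => by
        rw [Finset.mem_range, not_lt] at hk2
        rw [hg]; simp only []
        rw [if_neg (by omega), mul_zero])]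
  rw [← Finset.sum_range_reflect (fun t => μ^(n-t) * ((n.choose t : ℕ) : ℂ) * g t) ((j:ℕ)+1)]
  have han : a < n := by omega
  have step5 : ∀ k ∈ Finset.range ((j:ℕ)+1),
      μ^(n-((j:ℕ)+1-1-k)) * ((n.choose ((j:ℕ)+1-1-k) : ℕ) : ℂ) * g ((j:ℕ)+1-1-k)
      = (μ^(n-(j:ℕ)) * μ^((i:ℕ)+1)) * ((-1:ℂ)^k * ((k.choose a : ℕ) : ℂ) * ((n.choose ((j:ℕ)-k) : ℕ) : ℂ)) := by
    intro k hk
    rw [Finset.mem_range] at hk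
    rw [show (j:ℕ)+1-1-k = (j:ℕ)-k by omega, hg]
    simp only []
    rw [if_pos (by omega), show (j:ℕ)-((j:ℕ)-k) = k by omega,
      show n-((j:ℕ)-k) = (n-(j:ℕ))+k by omega, pow_add, neg_pow]
    have hX : μ^k * μ^k = 1 := by
      rw [← pow_add, ← two_mul, pow_mul, hμ2, one_pow]
    linear_combination (μ^(n-(j:ℕ)) * μ^((i:ℕ)+1) * (-1:ℂ)^k * ((k.choose a : ℕ) : ℂ)
      * ((n.choose ((j:ℕ)-k) : ℕ) : ℂ)) * hX
  rw [Finset.sum_congr rfl step5, ← Finset.mul_sum, key_sum n (j:ℕ) a han]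
  simp only [Delta, Matrix.of_apply]
  by_cases hc : a ≤ (j:ℕ)
  · rw [if_pos hc]
    rw [show n-1-a = (i:ℕ) by omega, show (j:ℕ)-a = (i:ℕ)-(n-1-(j:ℕ)) by omega,
      Nat.choose_symm (show n-1-(j:ℕ) ≤ (i:ℕ) by omega), show n-((j:ℕ)+1) = n-1-(j:ℕ) by omega]
    have hs : μ^((j:ℕ)+1) * (-μ)^((i:ℕ)) = -(μ^(n-(j:ℕ)) * μ^((i:ℕ)+1) * (-1:ℂ)^a) := by
      rcases Nat.even_or_odd n with hpar | hpar
      · have hn2 : n % 2 = 0 := Nat.even_iff.1 hpar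
        have hμ1 : μ = 1 := by rw [hμ]; exact hpar.neg_one_pow
        rw [hμ1]
        simp only [one_pow, one_mul, mul_one]
        rw [show ((-1:ℂ))^((i:ℕ)) = (-1)^(a+1) from negpow _ _ (by omega), pow_succ]
        ring
      · have hn2 : n % 2 = 1 := Nat.odd_iff.1 hpar
        have hμ1 : μ = -1 := by rw [hμ]; exact hpar.neg_one_pow
        rw [hμ1]
        simp only [neg_neg, one_pow, mul_one]
        rw [show ((-1:ℂ))^(n-(j:ℕ)) * (-1:ℂ)^((i:ℕ)+1) * (-1:ℂ)^a
            = (-1:ℂ)^(((n-(j:ℕ))+((i:ℕ)+1))+a) from by rw [pow_add, pow_add]; ring]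
        rw [show -((-1:ℂ)^(((n-(j:ℕ))+((i:ℕ)+1))+a)) = (-1:ℂ)^((((n-(j:ℕ))+((i:ℕ)+1))+a)+1)
            from by rw [pow_succ]; ring]
        exact negpow _ _ (by omega)
    linear_combination (((i:ℕ).choose (n-1-(j:ℕ)) : ℕ) : ℂ) * hs
  · rw [if_neg hc]
    rw [Nat.choose_eq_zero_of_lt (show (i:ℕ) < n-((j:ℕ)+1) by omega)]
    simp

lemma lemConj (n : ℕ) (hn : 1 ≤ n) (μ : ℂ) (hμ : μ = (-1)^n) : ∀ m : ℕ,
    ((Jmat n μ)ᵀ)^m * Delta n μ * (Jmat n μ)^m = Delta n μ := by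
  intro m
  induction m with
  | zero => simp
  | succ m ih =>
    rw [pow_succ ((Jmat n μ)ᵀ) m, pow_succ' (Jmat n μ) m]
    rw [show ((Jmat n μ)ᵀ)^m * (Jmat n μ)ᵀ * Delta n μ * (Jmat n μ * (Jmat n μ)^m)
        = ((Jmat n μ)ᵀ)^m * ((Jmat n μ)ᵀ * Delta n μ * Jmat n μ) * (Jmat n μ)^m from by
      simp only [mul_assoc]]
    rw [lemB n hn μ hμ, ih]

lemma lemT (n : ℕ) (hn : 1 ≤ n) (μ : ℂ) (hμ : μ = (-1)^n) (m : ℕ) (hm : m ≤ n) :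
    (Delta n μ * (Jmat n μ)^m)ᵀ = -(Delta n μ * (Jmat n μ)^(n-m)) := by
  rw [Matrix.transpose_mul, Matrix.transpose_pow, lemA n hn μ hμ, mul_neg]
  rw [show (Jmat n μ)^n = (Jmat n μ)^m * (Jmat n μ)^(n-m) from by
    rw [← pow_add, show m + (n-m) = n by omega]]
  rw [show ((Jmat n μ)ᵀ)^m * (Delta n μ * ((Jmat n μ)^m * (Jmat n μ)^(n-m)))
      = (((Jmat n μ)ᵀ)^m * Delta n μ * (Jmat n μ)^m) * (Jmat n μ)^(n-m) from by
    simp only [mul_assoc]]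
  rw [lemConj n hn μ hμ m]

/-- for `0 ≤ ℓ ≤ n−1`, the matrix `B = Δ_n·(J_n(μ)^ℓ + J_n(μ)^(n−1−ℓ))`
satisfies `B·J_n(μ) + Bᵀ = 0`, where `μ = (-1)^n`. -/
theorem stmt_11 (n : ℕ) (hn : 1 ≤ n) (μ : ℂ) (hμ : μ = (-1) ^ n) :
    ∀ ℓ : ℕ, ℓ ≤ n - 1 →
      (Delta n μ * ((Jmat n μ) ^ ℓ + (Jmat n μ) ^ (n - 1 - ℓ))) * Jmat n μ +
        (Delta n μ * ((Jmat n μ) ^ ℓ + (Jmat n μ) ^ (n - 1 - ℓ)))ᵀ = 0 := by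
  intro ℓ hℓ
  rw [mul_add, Matrix.transpose_add, add_mul]
  rw [mul_assoc, ← pow_succ, mul_assoc, ← pow_succ]
  rw [lemT n hn μ hμ ℓ (by omega), lemT n hn μ hμ (n-1-ℓ) (by omega)]
  rw [show n - 1 - ℓ + 1 = n - ℓ by omega, show n - (n-1-ℓ) = ℓ + 1 by omega,
    show n - ℓ = n - 1 - ℓ + 1 by omega]
  abel
end
end

section
/- Let n ≥ 1, let μ = (-1)^n, and let Δ_n be the n×n complex matrix with (i,j) entry μ^i·(−μ)^{j−1}·C(j−1, n−i) for 1 ≤ i, j ≤ n. Let α_0, …, α_{n−1} be complex numbers and set B = Δ_n · Σ_{j=0}^{n−1} α_j·J_n(μ)^j. Then B·J_n(μ) + Bᵀ = 0 if and only if α_j = α_{n−1−j} for all j with 0 ≤ j ≤ n−1. -/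
open Matrix BigOperators Finset

noncomputable section

namespace Stmt12Aux

variable {n : ℕ} {μ : ℂ}

lemma mul_jmat (A : Matrix (Fin n) (Fin n) ℂ) (i j : Fin n) :
    (A * Jmat n μ) i j = μ * A i j +
      (if _ : (j : ℕ) = 0 then 0 else A i ⟨(j : ℕ) - 1, lt_of_le_of_lt (Nat.sub_le _ _) j.isLt⟩) := by
  rw [Matrix.mul_apply]
  have key : ∀ t : Fin n, A i t * Jmat n μ t j =
      (if j = t then μ * A i t else 0) + (if (j : ℕ) = (t : ℕ) + 1 then A i t else 0) := by
    intro t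
    simp only [Jmat, Matrix.of_apply]
    by_cases h1 : t = j
    · subst h1; rw [if_pos rfl, if_pos rfl, if_neg (by omega)]; ring
    · rw [if_neg h1]
      by_cases h2 : (j : ℕ) = (t : ℕ) + 1
      · rw [if_pos h2, if_neg (show ¬ j = t from fun h => h1 h.symm), if_pos h2]; ring
      · rw [if_neg h2, if_neg (show ¬ j = t from fun h => h1 h.symm), if_neg h2]; ring
  simp only [key]
  rw [Finset.sum_add_distrib, Finset.sum_ite_eq]
  simp only [Finset.mem_univ, if_pos]
  congr 1
  by_cases hj : (j : ℕ) = 0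
  · rw [dif_pos hj]
    exact Finset.sum_eq_zero fun t _ => by rw [if_neg (by omega)]
  · rw [dif_neg hj,
      Finset.sum_eq_single (⟨(j : ℕ) - 1, lt_of_le_of_lt (Nat.sub_le _ _) j.isLt⟩ : Fin n)
        (fun b _ hb => by
          rw [if_neg]
          exact fun h => hb (Fin.ext (show (b : ℕ) = (j : ℕ) - 1 by omega)))
        (fun h => absurd (Finset.mem_univ _) h),
      if_pos (show (j : ℕ) = ((j : ℕ) - 1) + 1 by omega)]

lemma jmatT_mul (A : Matrix (Fin n) (Fin n) ℂ) (i j : Fin n) :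
    ((Jmat n μ)ᵀ * A) i j = μ * A i j +
      (if _ : (i : ℕ) = 0 then 0 else A ⟨(i : ℕ) - 1, lt_of_le_of_lt (Nat.sub_le _ _) i.isLt⟩ j) := by
  rw [Matrix.mul_apply]
  have key : ∀ t : Fin n, (Jmat n μ)ᵀ i t * A t j =
      (if i = t then μ * A t j else 0) + (if (i : ℕ) = (t : ℕ) + 1 then A t j else 0) := by
    intro t
    simp only [Jmat, Matrix.transpose_apply, Matrix.of_apply]
    by_cases h1 : t = i
    · subst h1; rw [if_pos rfl, if_pos rfl, if_neg (by omega)]; ring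
    · rw [if_neg h1]
      by_cases h2 : (i : ℕ) = (t : ℕ) + 1
      · rw [if_pos h2, if_neg (show ¬ i = t from fun h => h1 h.symm), if_pos h2]; ring
      · rw [if_neg h2, if_neg (show ¬ i = t from fun h => h1 h.symm), if_neg h2]; ring
  simp only [key]
  rw [Finset.sum_add_distrib, Finset.sum_ite_eq]
  simp only [Finset.mem_univ, if_pos]
  congr 1
  by_cases hi : (i : ℕ) = 0
  · rw [dif_pos hi]
    exact Finset.sum_eq_zero fun t _ => by rw [if_neg (by omega)]
  · rw [dif_neg hi,
      Finset.sum_eq_single (⟨(i : ℕ) - 1, lt_of_le_of_lt (Nat.sub_le _ _) i.isLt⟩ : Fin n)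
        (fun b _ hb => by
          rw [if_neg]
          exact fun h => hb (Fin.ext (show (b : ℕ) = (i : ℕ) - 1 by omega)))
        (fun h => absurd (Finset.mem_univ _) h),
      if_pos (show (i : ℕ) = ((i : ℕ) - 1) + 1 by omega)]

lemma pow_sub_two (hμ2 : μ * μ = 1) (a : ℕ) : μ ^ (a + 2) = μ ^ a := by
  rw [pow_succ, pow_succ, mul_assoc, hμ2, mul_one]

lemma jmat_pow (hμ2 : μ * μ = 1) (k : ℕ) (i j : Fin n) :
    ((Jmat n μ) ^ k) i j = if (i : ℕ) ≤ (j : ℕ) then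
      μ ^ (k + ((j : ℕ) - (i : ℕ))) * (Nat.choose k ((j : ℕ) - (i : ℕ)) : ℂ) else 0 := by
  induction k generalizing i j with
  | zero =>
    simp only [pow_zero, Matrix.one_apply]
    rcases lt_trichotomy (i : ℕ) (j : ℕ) with h | h | h
    · rw [if_neg (show ¬ i = j from fun he => by rw [he] at h; omega), if_pos (le_of_lt h),
        Nat.choose_eq_zero_of_lt (by omega)]
      simp
    · rw [if_pos (Fin.ext h), if_pos (le_of_eq h)]
      simp [Nat.sub_eq_zero_of_le (le_of_eq h.symm)]
    · rw [if_neg (show ¬ i = j from fun he => by rw [he] at h; omega), if_neg (by omega)]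
  | succ k ih =>
    rw [pow_succ, mul_jmat, ih]
    by_cases hj : (j : ℕ) = 0
    · rw [dif_pos hj]
      rcases Nat.eq_zero_or_pos (i : ℕ) with hi | hi
      · rw [if_pos (by omega), if_pos (by omega)]
        simp only [hi, hj, Nat.sub_zero, Nat.add_zero, Nat.choose_zero_right, Nat.cast_one]
        rw [pow_succ]
        ring
      · rw [if_neg (by omega), if_neg (by omega)]
        ring
    · rw [dif_neg hj, ih]
      rcases lt_trichotomy (i : ℕ) (j : ℕ) with h | h | h
      · rw [if_pos (le_of_lt h), if_pos (le_of_lt h),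
          if_pos (show (i : ℕ) ≤ (j : ℕ) - 1 by omega)]
        obtain ⟨d, hd⟩ : ∃ d, (j : ℕ) - (i : ℕ) = d + 1 := ⟨(j : ℕ) - (i : ℕ) - 1, by omega⟩
        have hd2 : (j : ℕ) - 1 - (i : ℕ) = d := by omega
        rw [hd, hd2, Nat.choose_succ_succ k d]
        push_cast
        have e1 : μ * μ ^ (k + (d + 1)) = μ ^ (k + d) := by
          have e : μ * μ ^ (k + (d + 1)) = μ ^ (k + d + 2) := by
            rw [show k + d + 2 = (k + (d + 1)) + 1 from by ring, pow_succ]; ring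
          rw [e, pow_sub_two hμ2]
        have e2 : μ ^ (k + 1 + (d + 1)) = μ ^ (k + d) := by
          rw [show k + 1 + (d + 1) = (k + d) + 2 from by ring, pow_sub_two hμ2]
        linear_combination (↑(Nat.choose k (d + 1)) : ℂ) * e1 -
          ((↑(Nat.choose k d) : ℂ) + (↑(Nat.choose k (d + 1)) : ℂ)) * e2
      · rw [if_pos (le_of_eq h), if_pos (le_of_eq h),
          if_neg (show ¬ (i : ℕ) ≤ (j : ℕ) - 1 by omega)]
        rw [Nat.sub_eq_zero_of_le (le_of_eq h.symm)]
        simp only [Nat.add_zero, Nat.choose_zero_right, Nat.cast_one]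
        rw [pow_succ]
        ring
      · rw [if_neg (show ¬ (i : ℕ) ≤ (j : ℕ) from by omega),
          if_neg (show ¬ (i : ℕ) ≤ (j : ℕ) - 1 by omega),
          if_neg (show ¬ (i : ℕ) ≤ (j : ℕ) from by omega)]
        ring

lemma jT_delta_j (hμ2 : μ * μ = 1) :
    (Jmat n μ)ᵀ * (Delta n μ * Jmat n μ) = Delta n μ := by
  ext i j
  rw [jmatT_mul]
  simp only [mul_jmat]
  simp only [Delta, Matrix.of_apply]
  by_cases hi : (i : ℕ) = 0
  · rw [dif_pos hi]
    by_cases hj : (j : ℕ) = 0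
    · rw [dif_pos hj]
      simp only [hi, hj]
      linear_combination (μ ^ (0 + 1) * (-μ) ^ 0 * ((0 : ℕ).choose (n - (0 + 1)) : ℂ)) * hμ2
    · rw [dif_neg hj]
      simp only [hi]
      have hz : (((j : ℕ) - 1).choose (n - (0 + 1)) : ℂ) = 0 := by
        rw [Nat.choose_eq_zero_of_lt (by omega)]
        simp
      rw [hz, mul_zero, add_zero, add_zero]
      linear_combination (μ ^ (0 + 1) * (-μ) ^ (j : ℕ) * (((j : ℕ)).choose (n - (0 + 1)) : ℂ)) * hμ2
  · rw [dif_neg hi]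
    obtain ⟨e, he⟩ : ∃ e, (i : ℕ) = e + 1 := ⟨(i : ℕ) - 1, by omega⟩
    have hen : e + 1 < n := he ▸ i.isLt
    simp only [he, Nat.add_sub_cancel]
    obtain ⟨a, ha⟩ : ∃ a, n - (e + 1 + 1) = a := ⟨n - (e + 2), rfl⟩
    have ha2 : n - (e + 1) = a + 1 := by omega
    by_cases hj : (j : ℕ) = 0
    · rw [dif_pos hj, dif_pos hj]
      simp only [hj, ha, ha2]
      rw [show ((0 : ℕ).choose (a + 1) : ℂ) = 0 from by
        rw [Nat.choose_eq_zero_of_lt (by omega)]; simp]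
      linear_combination (μ ^ (e + 1 + 1) * (-μ) ^ 0 * ((0 : ℕ).choose a : ℂ)) * hμ2
    · rw [dif_neg hj, dif_neg hj]
      obtain ⟨d, hd⟩ : ∃ d, (j : ℕ) = d + 1 := ⟨(j : ℕ) - 1, by omega⟩
      simp only [hd, Nat.add_sub_cancel, ha, ha2]
      rw [Nat.choose_succ_succ d a]
      push_cast
      linear_combination (μ ^ (e + 1 + 1) * (-μ) ^ (d + 1) * ((d + 1).choose a : ℂ)
        - ((d).choose (a + 1) : ℂ) * μ ^ (e + 1) * (-μ) ^ d) * hμ2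

lemma jT_pow_delta_j_pow (hμ2 : μ * μ = 1) (k : ℕ) :
    ((Jmat n μ)ᵀ) ^ k * (Delta n μ * (Jmat n μ) ^ k) = Delta n μ := by
  induction k with
  | zero => simp
  | succ k ih =>
    rw [pow_succ ((Jmat n μ)ᵀ) k, pow_succ' (Jmat n μ) k]
    calc ((Jmat n μ)ᵀ) ^ k * (Jmat n μ)ᵀ * (Delta n μ * (Jmat n μ * (Jmat n μ) ^ k))
        = ((Jmat n μ)ᵀ) ^ k * (((Jmat n μ)ᵀ * (Delta n μ * Jmat n μ)) * (Jmat n μ) ^ k) := by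
          simp only [← Matrix.mul_assoc]
      _ = Delta n μ := by rw [jT_delta_j hμ2]; exact ih

lemma alt_sum_choose (m : ℕ) (j : ℕ) :
    ∑ s ∈ Finset.range (j + 1), (-1 : ℤ) ^ s * ((m + 1).choose s : ℤ) =
      (-1) ^ j * (m.choose j : ℤ) := by
  induction j with
  | zero => simp
  | succ j ih =>
    rw [Finset.sum_range_succ, ih, Nat.choose_succ_succ m j]
    push_cast
    ring

lemma alt_vandermonde (m : ℕ) : ∀ a ≤ m, ∀ j ≤ m,
    ∑ t ∈ Finset.range (j + 1), (-1 : ℤ) ^ t * (t.choose a : ℤ) * ((m + 1).choose (j - t) : ℤ) =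
      (-1) ^ a * ((m - a).choose (m - j) : ℤ) := by
  intro a
  induction a with
  | zero =>
    intro _ j hj
    have hrefl := Finset.sum_range_reflect
      (fun t => (-1 : ℤ) ^ t * (t.choose 0 : ℤ) * ((m + 1).choose (j - t) : ℤ)) (j + 1)
    simp only [Nat.choose_zero_right, Nat.cast_one, mul_one] at hrefl ⊢
    rw [← hrefl]
    have key : ∀ t ∈ Finset.range (j + 1),
        (-1 : ℤ) ^ (j + 1 - 1 - t) * ((m + 1).choose (j - (j + 1 - 1 - t)) : ℤ) =
          (-1 : ℤ) ^ j * ((-1 : ℤ) ^ t * ((m + 1).choose t : ℤ)) := by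
      intro t ht
      rw [Finset.mem_range] at ht
      have h1 : j + 1 - 1 - t = j - t := by omega
      have h2 : j - (j - t) = t := by omega
      rw [h1, h2]
      have h3 : (-1 : ℤ) ^ (j - t) * (-1 : ℤ) ^ t = (-1 : ℤ) ^ j := by
        rw [← pow_add]
        congr 1
        omega
      have h4 : (-1 : ℤ) ^ t * (-1 : ℤ) ^ t = 1 := by
        rw [← pow_add, ← two_mul, pow_mul]
        norm_num
      calc (-1 : ℤ) ^ (j - t) * ((m + 1).choose t : ℤ)
          = ((-1 : ℤ) ^ (j - t) * (-1 : ℤ) ^ t) * ((-1 : ℤ) ^ t * ((m + 1).choose t : ℤ)) := by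
            rw [mul_assoc ((-1 : ℤ) ^ (j - t)), ← mul_assoc ((-1 : ℤ) ^ t), h4, one_mul]
        _ = (-1 : ℤ) ^ j * ((-1 : ℤ) ^ t * ((m + 1).choose t : ℤ)) := by rw [h3]
    rw [Finset.sum_congr rfl key, ← Finset.mul_sum, alt_sum_choose m j]
    have h4 : (-1 : ℤ) ^ j * (-1 : ℤ) ^ j = 1 := by
      rw [← pow_add, ← two_mul, pow_mul]; norm_num
    rw [← mul_assoc, h4, one_mul, pow_zero, one_mul, Nat.sub_zero, Nat.choose_symm hj]
  | succ a iha =>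
    intro ha
    have ha' : a ≤ m := by omega
    intro j
    induction j with
    | zero =>
      intro _
      rw [Finset.sum_range_one, Nat.choose_eq_zero_of_lt (show 0 < a + 1 by omega),
        Nat.choose_eq_zero_of_lt (show m - (a + 1) < m - 0 by omega)]
      simp
    | succ j ihj =>
      intro hj
      have hj' : j ≤ m := by omega
      rw [Finset.sum_range_succ']
      simp only [Nat.choose_eq_zero_of_lt (show 0 < a + 1 by omega), Nat.cast_zero, mul_zero,
        zero_mul, add_zero]
      have step : ∀ t, (-1 : ℤ) ^ (t + 1) * ((t + 1).choose (a + 1) : ℤ) *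
          ((m + 1).choose (j + 1 - (t + 1)) : ℤ) =
          -((-1 : ℤ) ^ t * (t.choose a : ℤ) * ((m + 1).choose (j - t) : ℤ))
          - ((-1 : ℤ) ^ t * (t.choose (a + 1) : ℤ) * ((m + 1).choose (j - t) : ℤ)) := by
        intro t
        have h1 : j + 1 - (t + 1) = j - t := by omega
        rw [h1, Nat.choose_succ_succ t a, pow_succ]
        push_cast
        ring
      rw [Finset.sum_congr rfl (fun t _ => step t), Finset.sum_sub_distrib,
        Finset.sum_neg_distrib, iha ha' j hj', ihj hj']
      have hpascal : ((m - a).choose (m - j) : ℤ) =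
          ((m - (a + 1)).choose (m - (j + 1)) : ℤ) + ((m - (a + 1)).choose (m - j) : ℤ) := by
        have e1 : m - a = (m - (a + 1)) + 1 := by omega
        have e2 : m - j = (m - (j + 1)) + 1 := by omega
        rw [e1, e2, Nat.choose_succ_succ]
        push_cast
        ring
      rw [hpascal, pow_succ]
      ring

lemma neg1pow {a b : ℕ} (h : a % 2 = b % 2) : ((-1 : ℂ)) ^ a = (-1) ^ b := by
  rw [← Nat.div_add_mod a 2, ← Nat.div_add_mod b 2, pow_add, pow_add, pow_mul, pow_mul, h]
  norm_num

lemma deltaT (hn : 1 ≤ n) (hμ2 : μ * μ = 1) (hμn : μ ^ n = (-1 : ℂ) ^ n) :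
    (Delta n μ)ᵀ = -(Delta n μ * (Jmat n μ) ^ n) := by
  ext i j
  rw [Matrix.transpose_apply, Matrix.neg_apply, Matrix.mul_apply]
  obtain ⟨a, ha⟩ : ∃ a, n - ((i : ℕ) + 1) = a := ⟨_, rfl⟩
  have hsum : ∑ t : Fin n, Delta n μ i t * (Jmat n μ ^ n) t j
      = ∑ t ∈ Finset.range n, (fun tn : ℕ =>
          μ ^ ((i : ℕ) + 1) * (-μ) ^ tn * ((tn.choose (n - ((i : ℕ) + 1))) : ℂ) *
          (if tn ≤ (j : ℕ) then μ ^ (n + ((j : ℕ) - tn)) * ((n.choose ((j : ℕ) - tn)) : ℂ)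
            else 0)) t := by
    rw [← Fin.sum_univ_eq_sum_range]
    exact Finset.sum_congr rfl fun t _ => by
      simp only [Delta, Matrix.of_apply, jmat_pow hμ2]
  rw [hsum]
  rw [← Finset.sum_subset (Finset.range_subset_range.2 (show (j : ℕ) + 1 ≤ n from j.isLt))
    (fun t ht hnt => by
      simp only [Finset.mem_range] at ht hnt
      rw [if_neg (by omega), mul_zero])]
  have hterm : ∀ t ∈ Finset.range ((j : ℕ) + 1),
      (μ ^ ((i : ℕ) + 1) * (-μ) ^ t * ((t.choose (n - ((i : ℕ) + 1))) : ℂ) *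
        (if t ≤ (j : ℕ) then μ ^ (n + ((j : ℕ) - t)) * ((n.choose ((j : ℕ) - t)) : ℂ) else 0))
      = (μ ^ ((i : ℕ) + 1) * μ ^ (n + (j : ℕ))) *
          (((-1 : ℂ)) ^ t * ((t.choose a) : ℂ) * ((n.choose ((j : ℕ) - t)) : ℂ)) := by
    intro t ht
    rw [Finset.mem_range] at ht
    rw [if_pos (by omega), ha, neg_pow]
    have hp : μ ^ t * μ ^ (n + ((j : ℕ) - t)) = μ ^ (n + (j : ℕ)) := by
      rw [← pow_add]; congr 1; omega
    linear_combination (μ ^ ((i : ℕ) + 1) * ((-1 : ℂ)) ^ t * ((t.choose a) : ℂ) *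
      ((n.choose ((j : ℕ) - t)) : ℂ)) * hp
  rw [Finset.sum_congr rfl hterm, ← Finset.mul_sum]
  have hz := alt_vandermonde (n - 1) a (by omega) (j : ℕ) (by omega)
  rw [show n - 1 + 1 = n from by omega] at hz
  have hzC := congrArg (fun z : ℤ => (z : ℂ)) hz
  push_cast at hzC
  rw [hzC]
  have hia : n - 1 - a = (i : ℕ) := by omega
  have hja : n - 1 - (j : ℕ) = n - ((j : ℕ) + 1) := by omega
  rw [hia, hja]
  have key : ((-1 : ℂ)) ^ (i : ℕ) = -(μ ^ n * (-1) ^ a) := by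
    rw [hμn, ← pow_add]
    have : ((-1 : ℂ)) ^ (n + a) = (-1) ^ ((i : ℕ) + 1) := neg1pow (by omega)
    rw [this, pow_succ]
    ring
  rw [Delta, Matrix.of_apply, neg_pow]
  rw [pow_add μ n (j : ℕ)]
  linear_combination (μ ^ ((j : ℕ) + 1) * μ ^ (i : ℕ) *
    (((i : ℕ).choose (n - ((j : ℕ) + 1))) : ℂ)) * key

lemma isUnit_jmat (hμ0 : μ ≠ 0) : IsUnit (Jmat n μ) := by
  rw [Matrix.isUnit_iff_isUnit_det]
  have htri : (Jmat n μ).BlockTriangular id := by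
    intro i j hij
    simp only [id_eq] at hij
    simp only [Jmat, Matrix.of_apply]
    rw [if_neg (show ¬ i = j from fun h => by rw [h] at hij; exact lt_irrefl _ hij),
      if_neg (show ¬ (j : ℕ) = (i : ℕ) + 1 from by
        have := Fin.lt_def.mp hij; omega)]
  rw [Matrix.det_of_upperTriangular htri]
  have hdiag : ∀ i : Fin n, Jmat n μ i i = μ := fun i => by simp [Jmat]
  rw [Finset.prod_congr rfl (fun i _ => hdiag i), Finset.prod_const]
  exact isUnit_iff_ne_zero.2 (pow_ne_zero _ hμ0)

lemma isUnit_delta (hμ0 : μ ≠ 0) : IsUnit (Delta n μ) := by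
  rw [Matrix.isUnit_iff_isUnit_det, isUnit_iff_ne_zero]
  have hperm := Matrix.det_permute (Fin.revPerm) (Delta n μ)
  have hidx : ∀ i : Fin n, n - (((Fin.rev i) : ℕ) + 1) = (i : ℕ) := by
    intro i
    rw [Fin.val_rev]
    omega
  have htri : ((Delta n μ).submatrix Fin.revPerm id).BlockTriangular id := by
    intro i j hij
    simp only [id_eq] at hij
    simp only [Matrix.submatrix_apply, id_eq, Delta, Matrix.of_apply, Fin.revPerm_apply]
    rw [hidx i, Nat.choose_eq_zero_of_lt (Fin.lt_def.mp hij), Nat.cast_zero, mul_zero]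
  have hdet : ((Delta n μ).submatrix Fin.revPerm id).det ≠ 0 := by
    rw [Matrix.det_of_upperTriangular htri]
    apply Finset.prod_ne_zero_iff.2
    intro i _
    simp only [Matrix.submatrix_apply, id_eq, Delta, Matrix.of_apply, Fin.revPerm_apply]
    rw [hidx i, Nat.choose_self, Nat.cast_one, mul_one]
    exact mul_ne_zero (pow_ne_zero _ hμ0) (pow_ne_zero _ (neg_ne_zero.2 hμ0))
  intro h0
  rw [hperm] at hdet
  apply hdet
  rw [h0, mul_zero]

lemma lin_indep (hμ2 : μ * μ = 1) (hn : 1 ≤ n) (c : ℕ → ℂ)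
    (h : ∑ j ∈ Finset.range n, c j • (Jmat n μ) ^ j = 0) : ∀ j < n, c j = 0 := by
  have hsum : ∀ t : Fin n,
      ∑ b ∈ Finset.range n, c b * (μ ^ (b + (t : ℕ)) * ((b.choose (t : ℕ)) : ℂ)) = 0 := by
    intro t
    have h0 := congrFun (congrFun h ⟨0, hn⟩) t
    simp only [Matrix.sum_apply, Matrix.smul_apply, Matrix.zero_apply, smul_eq_mul] at h0
    rw [← h0]
    apply Finset.sum_congr rfl
    intro b _
    rw [jmat_pow hμ2, if_pos (Nat.zero_le _)]
    norm_num
  have key : ∀ m : ℕ, ∀ j, j < n → n - j ≤ m → c j = 0 := by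
    intro m
    induction m with
    | zero => intro j hj hm; omega
    | succ m ih =>
      intro j hj hm
      have ht := hsum ⟨j, hj⟩
      rw [Finset.sum_eq_single j
        (fun b hb hbj => by
          rw [Finset.mem_range] at hb
          rcases lt_or_gt_of_ne hbj with hlt | hgt
          · rw [Nat.choose_eq_zero_of_lt (show b < (((⟨j, hj⟩ : Fin n)) : ℕ) from hlt),
              Nat.cast_zero, mul_zero, mul_zero]
          · rw [ih b hb (by omega), zero_mul])
        (fun hb => absurd (Finset.mem_range.2 hj) hb)] at ht
      rw [Nat.choose_self, Nat.cast_one, mul_one] at ht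
      have hp : μ ^ (j + ((⟨j, hj⟩ : Fin n) : ℕ)) = 1 := by
        rw [show j + ((⟨j, hj⟩ : Fin n) : ℕ) = j + j from rfl, ← two_mul, pow_mul, pow_two, hμ2,
          one_pow]
      rw [hp, mul_one] at ht
      exact ht
  intro j hj
  exact key (n - j) j hj le_rfl

end Stmt12Aux

open Stmt12Aux in
/-- for `B = Δ_n · Σ_{j<n} α_j J_n(μ)^j` (with `μ = (-1)^n`),
`B·J_n(μ) + Bᵀ = 0` iff `α_j = α_{n−1−j}` for all `j < n`. -/
theorem stmt_12 (n : ℕ) (hn : 1 ≤ n) (μ : ℂ) (hμ : μ = (-1) ^ n) (α : ℕ → ℂ)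
    (B : Matrix (Fin n) (Fin n) ℂ)
    (hB : B = Delta n μ * ∑ j ∈ Finset.range n, α j • (Jmat n μ) ^ j) :
    B * Jmat n μ + Bᵀ = 0 ↔ ∀ j < n, α j = α (n - 1 - j) := by
  have hμ1 : μ = 1 ∨ μ = -1 := by
    rcases Nat.even_or_odd n with h | h
    · left; rw [hμ, h.neg_one_pow]
    · right; rw [hμ, h.neg_one_pow]
  have hμ2 : μ * μ = 1 := by rcases hμ1 with h | h <;> rw [h] <;> ring
  have hμ0 : μ ≠ 0 := by rcases hμ1 with h | h <;> rw [h] <;> norm_num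
  have hμn : μ ^ n = (-1 : ℂ) ^ n := by
    rcases hμ1 with h | h
    · rw [h, one_pow, ← hμ, h]
    · rw [h]
  -- rewrite B * J
  have hBJ : B * Jmat n μ = Delta n μ * ∑ j ∈ Finset.range n, α j • (Jmat n μ) ^ (j + 1) := by
    rw [hB, Matrix.mul_assoc]
    congr 1
    rw [Finset.sum_mul]
    exact Finset.sum_congr rfl fun k _ => by rw [Matrix.smul_mul, ← pow_succ]
  -- rewrite Bᵀ
  have hBt : Bᵀ = -(Delta n μ * ∑ j ∈ Finset.range n, α j • (Jmat n μ) ^ (n - j)) := by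
    rw [hB, Matrix.transpose_mul, deltaT hn hμ2 hμn, Matrix.transpose_sum]
    simp only [Matrix.transpose_smul, Matrix.transpose_pow]
    rw [Matrix.mul_neg, Finset.sum_mul, Finset.mul_sum, ← Finset.sum_neg_distrib,
      ← Finset.sum_neg_distrib]
    apply Finset.sum_congr rfl
    intro k hk
    rw [Finset.mem_range] at hk
    rw [Matrix.smul_mul, Matrix.mul_smul, ← smul_neg, ← smul_neg]
    congr 1
    have hsplit : (Jmat n μ) ^ n = (Jmat n μ) ^ k * (Jmat n μ) ^ (n - k) := by
      rw [← pow_add]; congr 1; omega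
    rw [hsplit]
    congr 1
    calc ((Jmat n μ)ᵀ) ^ k * (Delta n μ * ((Jmat n μ) ^ k * (Jmat n μ) ^ (n - k)))
        = (((Jmat n μ)ᵀ) ^ k * (Delta n μ * (Jmat n μ) ^ k)) * (Jmat n μ) ^ (n - k) := by
          simp only [← Matrix.mul_assoc]
      _ = Delta n μ * (Jmat n μ) ^ (n - k) := by rw [jT_pow_delta_j_pow hμ2]
  -- reindex the second sum
  have hS2 : ∑ j ∈ Finset.range n, α j • (Jmat n μ) ^ (n - j)
      = ∑ j ∈ Finset.range n, α (n - 1 - j) • (Jmat n μ) ^ (j + 1) := by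
    rw [← Finset.sum_range_reflect (fun j => α j • (Jmat n μ) ^ (n - j)) n]
    apply Finset.sum_congr rfl
    intro k hk
    rw [Finset.mem_range] at hk
    rw [show n - (n - 1 - k) = k + 1 from by omega]
  -- main chain
  rw [hBJ, hBt, hS2]
  have hdiff : Delta n μ * (∑ j ∈ Finset.range n, α j • Jmat n μ ^ (j + 1)) +
      -(Delta n μ * ∑ j ∈ Finset.range n, α (n - 1 - j) • Jmat n μ ^ (j + 1))
      = Delta n μ * (Jmat n μ *
          ∑ j ∈ Finset.range n, (α j - α (n - 1 - j)) • Jmat n μ ^ j) := by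
    rw [← sub_eq_add_neg, ← Matrix.mul_sub]
    congr 1
    rw [Finset.mul_sum, ← Finset.sum_sub_distrib]
    apply Finset.sum_congr rfl
    intro k _
    rw [← sub_smul, Matrix.mul_smul, ← pow_succ']
  rw [hdiff, (isUnit_delta hμ0).mul_right_eq_zero, (isUnit_jmat hμ0).mul_right_eq_zero]
  constructor
  · intro h0 j hj
    have := lin_indep hμ2 hn (fun j => α j - α (n - 1 - j)) h0 j hj
    exact sub_eq_zero.mp this
  · intro hsym
    apply Finset.sum_eq_zero
    intro k hk
    rw [Finset.mem_range] at hk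
    rw [sub_eq_zero.mpr (hsym k hk), zero_smul]
end
end

section
/- Let n ≥ 1, let μ = (-1)^n, and let Δ_n be the n×n complex matrix with (i,j) entry μ^i·(−μ)^{j−1}·C(j−1, n−i) for 1 ≤ i, j ≤ n. Then an n×n complex matrix B satisfies B·J_n(μ) + Bᵀ = 0 if and only if there exist complex numbers α_0, …, α_{⌈n/2⌉−1} such that B = Δ_n · Σ_{ℓ=0}^{⌈n/2⌉−1} α_ℓ·(J_n(μ)^ℓ + J_n(μ)^{n−1−ℓ}). -/
open Matrix BigOperators Finset

noncomputable section

namespace Aux13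

/-- entry of a matrix with ℕ indices, 0 out of range -/
def ent (n : ℕ) (A : Matrix (Fin n) (Fin n) ℂ) (i j : ℕ) : ℂ :=
  if h : i < n ∧ j < n then A ⟨i, h.1⟩ ⟨j, h.2⟩ else 0

variable {n : ℕ}

/-- entry of a matrix with ℕ indices, 0 out of range -/


lemma ent_apply (A : Matrix (Fin n) (Fin n) ℂ) {i j : ℕ} (hi : i < n) (hj : j < n) :
    ent n A i j = A ⟨i, hi⟩ ⟨j, hj⟩ := dif_pos ⟨hi, hj⟩

lemma ent_fin (A : Matrix (Fin n) (Fin n) ℂ) (i j : Fin n) :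
    ent n A i j = A i j := by rw [ent_apply A i.isLt j.isLt]

lemma ent_oor (A : Matrix (Fin n) (Fin n) ℂ) {i j : ℕ} (h : n ≤ i ∨ n ≤ j) :
    ent n A i j = 0 := by
  apply dif_neg; omega

lemma ext_ent {A B : Matrix (Fin n) (Fin n) ℂ}
    (h : ∀ i j : ℕ, i < n → j < n → ent n A i j = ent n B i j) : A = B := by
  ext i j
  have := h i j i.isLt j.isLt
  rwa [ent_apply A i.isLt j.isLt, ent_apply B i.isLt j.isLt, Fin.eta, Fin.eta] at this

lemma ent_mul (A B : Matrix (Fin n) (Fin n) ℂ) {i j : ℕ} (hi : i < n) (hj : j < n) :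
    ent n (A * B) i j = ∑ k ∈ range n, ent n A i k * ent n B k j := by
  rw [ent_apply _ hi hj, Matrix.mul_apply]
  rw [← Fin.sum_univ_eq_sum_range (fun k => ent n A i k * ent n B k j) n]
  apply Finset.sum_congr rfl
  intro k _
  rw [ent_apply A hi k.isLt, ent_apply B k.isLt hj, Fin.eta]

lemma ent_add (A B : Matrix (Fin n) (Fin n) ℂ) (i j : ℕ) :
    ent n (A + B) i j = ent n A i j + ent n B i j := by
  unfold ent; split <;> simp [Matrix.add_apply]

lemma ent_smul (c : ℂ) (A : Matrix (Fin n) (Fin n) ℂ) (i j : ℕ) :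
    ent n (c • A) i j = c * ent n A i j := by
  unfold ent; split <;> simp [Matrix.smul_apply]

lemma ent_sum {κ : Type*} (s : Finset κ) (f : κ → Matrix (Fin n) (Fin n) ℂ) (i j : ℕ) :
    ent n (∑ k ∈ s, f k) i j = ∑ k ∈ s, ent n (f k) i j := by
  unfold ent; split
  · simp [Matrix.sum_apply]
  · simp

lemma ent_transpose (A : Matrix (Fin n) (Fin n) ℂ) (i j : ℕ) :
    ent n Aᵀ i j = ent n A j i := by
  unfold ent
  by_cases h1 : i < n ∧ j < n
  · rw [dif_pos h1, dif_pos ⟨h1.2, h1.1⟩]; rfl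
  · rw [dif_neg h1, dif_neg (by tauto)]

lemma ent_one {i j : ℕ} (hi : i < n) (hj : j < n) :
    ent n 1 i j = if i = j then 1 else 0 := by
  rw [ent_apply _ hi hj, Matrix.one_apply]
  simp [Fin.mk.injEq]

lemma ent_J (μ : ℂ) {i j : ℕ} (hi : i < n) (hj : j < n) :
    ent n (Jmat n μ) i j = if i = j then μ else if j = i + 1 then 1 else 0 := by
  rw [ent_apply _ hi hj, Jmat, Matrix.of_apply]
  simp [Fin.mk.injEq]

lemma ent_Delta (μ : ℂ) {i j : ℕ} (hi : i < n) (hj : j < n) :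
    ent n (Delta n μ) i j = μ ^ (i + 1) * (-μ) ^ j * (j.choose (n - (i + 1)) : ℂ) := by
  rw [ent_apply _ hi hj, Delta, Matrix.of_apply]

lemma mul_J (μ : ℂ) (A : Matrix (Fin n) (Fin n) ℂ) {i j : ℕ} (hi : i < n) (hj : j < n) :
    ent n (A * Jmat n μ) i j
      = μ * ent n A i j + (if j = 0 then 0 else ent n A i (j - 1)) := by
  rw [ent_mul A _ hi hj]
  have hsplit : ∀ k ∈ range n, ent n A i k * ent n (Jmat n μ) k j
      = (if k = j then μ * ent n A i k else 0)
        + (if (j ≠ 0 ∧ k = j - 1) then ent n A i k else 0) := by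
    intro k hk
    rw [ent_J μ (mem_range.1 hk) hj]
    split_ifs <;> first | ring1 | (exfalso; omega)
  rw [Finset.sum_congr rfl hsplit, Finset.sum_add_distrib]
  congr 1
  · rw [Finset.sum_ite_eq' (range n) j (fun k => μ * ent n A i k), if_pos (mem_range.2 hj)]
  · by_cases hj0 : j = 0
    · simp [hj0]
    · have : ∀ k, (j ≠ 0 ∧ k = j - 1) ↔ k = j - 1 := by intro k; tauto
      simp only [this]
      rw [Finset.sum_ite_eq' (range n) (j-1) (fun k => ent n A i k),
        if_pos (mem_range.2 (by omega)), if_neg hj0]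

lemma J_mul (μ : ℂ) (A : Matrix (Fin n) (Fin n) ℂ) {i j : ℕ} (hi : i < n) (hj : j < n) :
    ent n (Jmat n μ * A) i j = μ * ent n A i j + ent n A (i + 1) j := by
  rw [ent_mul _ A hi hj]
  have hsplit : ∀ k ∈ range n, ent n (Jmat n μ) i k * ent n A k j
      = (if k = i then μ * ent n A k j else 0)
        + (if k = i + 1 then ent n A k j else 0) := by
    intro k hk
    rw [ent_J μ hi (mem_range.1 hk)]
    split_ifs <;> first | ring1 | (exfalso; omega)
  rw [Finset.sum_congr rfl hsplit, Finset.sum_add_distrib]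
  congr 1
  · rw [Finset.sum_ite_eq' (range n) i (fun k => μ * ent n A k j), if_pos (mem_range.2 hi)]
  · rw [Finset.sum_ite_eq' (range n) (i+1) (fun k => ent n A k j)]
    by_cases h : i + 1 < n
    · rw [if_pos (mem_range.2 h)]
    · rw [if_neg (by simpa using h), ent_oor A (Or.inl (by omega))]

lemma Jt_mul (μ : ℂ) (A : Matrix (Fin n) (Fin n) ℂ) {i j : ℕ} (hi : i < n) (hj : j < n) :
    ent n ((Jmat n μ)ᵀ * A) i j
      = μ * ent n A i j + (if i = 0 then 0 else ent n A (i - 1) j) := by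
  have h : (Jmat n μ)ᵀ * A = (Aᵀ * Jmat n μ)ᵀ := by
    rw [Matrix.transpose_mul, Matrix.transpose_transpose]
  rw [h, ent_transpose, mul_J μ Aᵀ hj hi, ent_transpose, ent_transpose]

lemma mul_Jt (μ : ℂ) (A : Matrix (Fin n) (Fin n) ℂ) {i j : ℕ} (hi : i < n) (hj : j < n) :
    ent n (A * (Jmat n μ)ᵀ) i j = μ * ent n A i j + ent n A i (j + 1) := by
  have h : A * (Jmat n μ)ᵀ = (Jmat n μ * Aᵀ)ᵀ := by
    rw [Matrix.transpose_mul, Matrix.transpose_transpose]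
  rw [h, ent_transpose, J_mul μ Aᵀ hj hi, ent_transpose, ent_transpose]

lemma pow_mod2 {μ : ℂ} (h : μ * μ = 1) {a b : ℕ} (hab : a % 2 = b % 2) : μ ^ a = μ ^ b := by
  have h2 : μ ^ 2 = 1 := by rw [pow_two]; exact h
  have key : ∀ c : ℕ, μ ^ c = μ ^ (c % 2) := by
    intro c
    conv_lhs => rw [← Nat.div_add_mod c 2]
    rw [pow_add, pow_mul, h2, one_pow, one_mul]
  rw [key a, key b, hab]

lemma JtDJ (μ : ℂ) (hμ : μ * μ = 1) :
    (Jmat n μ)ᵀ * Delta n μ * Jmat n μ = Delta n μ := by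
  apply ext_ent
  intro i j hi hj
  rw [mul_assoc, Jt_mul μ _ hi hj, mul_J μ _ hi hj]
  rcases i with _ | r
  · rw [if_pos rfl, add_zero]
    rcases j with _ | s
    · rw [if_pos rfl, add_zero, ent_Delta μ hi hj]
      linear_combination (μ ^ (0+1) * (-μ) ^ 0 * ((0:ℕ).choose (n - (0+1)) : ℂ)) * hμ
    · rw [if_neg (Nat.succ_ne_zero s), Nat.succ_sub_one, ent_Delta μ hi hj,
        ent_Delta μ hi (by omega : s < n)]
      have hch : (s.choose (n - (0+1)) : ℂ) = 0 := by
        rw [Nat.choose_eq_zero_of_lt (by omega)]; norm_num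
      rw [hch]
      linear_combination (μ ^ (0+1) * (-μ) ^ (s+1) * ((s+1).choose (n - (0+1)) : ℂ)) * hμ
  · have hr : r < n := by omega
    rw [if_neg (Nat.succ_ne_zero r), Nat.succ_sub_one, mul_J μ _ hr hj]
    rcases j with _ | s
    · rw [if_pos rfl, if_pos rfl, add_zero, add_zero, ent_Delta μ hi hj,
        ent_Delta μ hr hj]
      have hch : ((0:ℕ).choose (n - (r+1)) : ℂ) = 0 := by
        rw [Nat.choose_eq_zero_of_lt (by omega)]; norm_num
      rw [hch]
      linear_combination (μ ^ (r+1+1) * (-μ) ^ 0 * ((0:ℕ).choose (n - (r+1+1)) : ℂ)) * hμ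
    · have hs : s < n := by omega
      rw [if_neg (Nat.succ_ne_zero s), if_neg (Nat.succ_ne_zero s), Nat.succ_sub_one,
        ent_Delta μ hi hj, ent_Delta μ hi hs, ent_Delta μ hr hj, ent_Delta μ hr hs]
      have hP : ((s+1).choose (n - (r+1)) : ℂ)
          = (s.choose (n - (r+1+1)) : ℂ) + (s.choose (n - (r+1)) : ℂ) := by
        have h1 : n - (r+1) = (n - (r+1+1)) + 1 := by omega
        rw [h1, Nat.choose_succ_succ]
        push_cast; ring
      rw [hP]
      simp only [pow_succ]
      linear_combination (-(μ^(r+1) * (-μ)^s *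
        ((((s+1).choose (n - (r+1+1)) : ℕ) : ℂ) * μ * μ + ((s.choose (n - (r+1)) : ℕ) : ℂ)))) * hμ

lemma ent_Jpow (μ : ℂ) (hμ : μ * μ = 1) (t : ℕ) :
    ∀ {i j : ℕ}, i < n → j < n →
      ent n ((Jmat n μ) ^ t) i j
        = if i ≤ j then ((t.choose (j - i) : ℂ)) * μ ^ (t + (j - i)) else 0 := by
  induction t with
  | zero =>
    intro i j hi hj
    rw [pow_zero, ent_one hi hj]
    rcases lt_trichotomy i j with h | h | h
    · rw [if_neg (by omega), if_pos (by omega), Nat.choose_eq_zero_of_lt (by omega)]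
      norm_num
    · subst h; rw [if_pos rfl, if_pos le_rfl]; simp
    · rw [if_neg (by omega), if_neg (by omega)]
  | succ t ih =>
    intro i j hi hj
    rw [pow_succ, mul_J μ _ hi hj]
    rcases j with _ | s
    · rw [if_pos rfl, add_zero, ih hi hj]
      rcases Nat.eq_zero_or_pos i with h | h
      · subst h
        rw [if_pos le_rfl, if_pos le_rfl]
        simp only [Nat.sub_zero, Nat.choose_zero_right, Nat.cast_one, one_mul,
          Nat.add_zero]
        rw [pow_succ]; ring
      · rw [if_neg (by omega), if_neg (by omega), mul_zero]
    · have hs : s < n := by omega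
      rw [if_neg (Nat.succ_ne_zero s), Nat.succ_sub_one, ih hi hj, ih hi hs]
      rcases lt_trichotomy i (s+1) with h | h | h
      · -- i ≤ s
        have his : i ≤ s := by omega
        rw [if_pos (by omega), if_pos his, if_pos (by omega)]
        have hd : s + 1 - i = (s - i) + 1 := by omega
        rw [hd, Nat.choose_succ_succ]
        have hp1 : μ ^ (t + (s - i)) = μ ^ (t + 1 + (s - i + 1)) :=
          pow_mod2 hμ (by omega)
        rw [hp1]
        push_cast
        have hp2 : μ ^ (t + (s - i + 1)) * μ = μ ^ (t + 1 + (s - i + 1)) := by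
          rw [← pow_succ]
          congr 1
          omega
        rw [← hp2]
        ring
      · subst h
        rw [if_neg (by omega : ¬ (s+1 ≤ s)), add_zero, if_pos le_rfl, if_pos le_rfl,
          Nat.sub_self]
        simp only [Nat.choose_zero_right, Nat.cast_one, one_mul, Nat.add_zero]
        rw [pow_succ]; ring
      · rw [if_neg (by omega), if_neg (by omega), if_neg (by omega), mul_zero, add_zero]

lemma Sid (j : ℕ) : ∀ a : ℕ, a < n →
    ∑ k ∈ range (j + 1), ((-1 : ℂ)) ^ k * (k.choose a : ℂ) * (n.choose (j - k) : ℂ)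
      = if a ≤ j then (-1 : ℂ) ^ a * ((n - 1 - a).choose (j - a) : ℂ) else 0 := by
  induction j with
  | zero =>
    intro a ha
    rw [Finset.sum_range_one]
    rcases Nat.eq_zero_or_pos a with h | h
    · subst h; simp
    · rw [Nat.choose_eq_zero_of_lt (by omega), if_neg (by omega)]
      norm_num
  | succ j ih =>
    intro a ha
    rw [Finset.sum_range_succ']
    rcases Nat.eq_zero_or_pos a with h | h
    · subst h
      have hstep : ∀ k ∈ range (j+1),
          (-1:ℂ)^(k+1) * (((k+1).choose 0 : ℕ) : ℂ) * ((n.choose (j+1-(k+1)) : ℕ) : ℂ)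
            = -((-1:ℂ)^k * ((k.choose 0 : ℕ) : ℂ) * ((n.choose (j-k) : ℕ) : ℂ)) := by
        intro k hk
        have e : j + 1 - (k+1) = j - k := by omega
        rw [e]
        simp only [Nat.choose_zero_right, Nat.cast_one]
        rw [pow_succ]; ring
      rw [Finset.sum_congr rfl hstep, Finset.sum_neg_distrib, ih 0 (by omega)]
      rw [if_pos (Nat.zero_le j), if_pos (Nat.zero_le (j+1))]
      simp only [Nat.sub_zero, pow_zero, one_mul, Nat.choose_zero_right, Nat.cast_one]
      obtain ⟨m, rfl⟩ : ∃ m, n = m + 1 := ⟨n - 1, by omega⟩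
      simp only [Nat.add_sub_cancel]
      rw [Nat.choose_succ_succ]
      push_cast
      ring
    · obtain ⟨a', rfl⟩ : ∃ a', a = a' + 1 := ⟨a - 1, by omega⟩
      have hstep : ∀ k ∈ range (j+1),
          (-1:ℂ)^(k+1) * (((k+1).choose (a'+1) : ℕ) : ℂ) * ((n.choose (j+1-(k+1)) : ℕ) : ℂ)
            = -((-1:ℂ)^k * ((k.choose a' : ℕ) : ℂ) * ((n.choose (j-k) : ℕ) : ℂ))
              + -((-1:ℂ)^k * ((k.choose (a'+1) : ℕ) : ℂ) * ((n.choose (j-k) : ℕ) : ℂ)) := by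
        intro k hk
        have e : j + 1 - (k+1) = j - k := by omega
        rw [e, Nat.choose_succ_succ]
        push_cast
        rw [pow_succ]; ring
      rw [Finset.sum_congr rfl hstep, Finset.sum_add_distrib,
        Finset.sum_neg_distrib, Finset.sum_neg_distrib, ih a' (by omega), ih (a'+1) ha]
      rw [Nat.choose_eq_zero_of_lt (by omega : 0 < a' + 1)]
      push_cast
      by_cases h2 : a' ≤ j
      · rw [if_pos h2, if_pos h2]
        by_cases h1 : a' + 1 ≤ j
        · rw [if_pos h1]
          have e1 : n - 1 - a' = (n - 1 - (a'+1)) + 1 := by omega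
          have e2 : j - a' = (j - (a'+1)) + 1 := by omega
          rw [e1, e2, Nat.choose_succ_succ]
          push_cast
          rw [pow_succ]; ring
        · rw [if_neg h1]
          have e1 : j - a' = 0 := by omega
          rw [e1]
          simp only [Nat.choose_zero_right, Nat.cast_one]
          rw [pow_succ]; ring
      · rw [if_neg h2, if_neg h2, if_neg (by omega : ¬ (a' + 1 ≤ j))]
        norm_num

lemma ent_neg (A : Matrix (Fin n) (Fin n) ℂ) (i j : ℕ) :
    ent n (-A) i j = -(ent n A i j) := by
  unfold ent; split <;> simp

lemma sq_of_sign {n : ℕ} (μ : ℂ) (hμ : μ = (-1) ^ n) : μ * μ = 1 := by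
  subst hμ
  rw [← pow_add]
  exact Even.neg_one_pow ⟨n, rfl⟩

lemma DeltaT {n : ℕ} (hn : 1 ≤ n) (μ : ℂ) (hμ : μ = (-1) ^ n) :
    (Delta n μ)ᵀ = -(Delta n μ * (Jmat n μ) ^ n) := by
  have hμ2 : μ * μ = 1 := sq_of_sign μ hμ
  apply ext_ent
  intro i j hi hj
  rw [ent_transpose, ent_Delta μ hj hi, ent_neg, ent_mul _ _ hi hj]
  have hstep : ∀ k ∈ range n, ent n (Delta n μ) i k * ent n ((Jmat n μ) ^ n) k j
      = μ ^ (i + 1 + n + j) *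
          (if k ≤ j then (-1 : ℂ) ^ k * (k.choose (n - (i+1)) : ℂ) * (n.choose (j - k) : ℂ)
           else 0) := by
    intro k hk
    rw [ent_Delta μ hi (mem_range.1 hk), ent_Jpow μ hμ2 n (mem_range.1 hk) hj]
    by_cases hkj : k ≤ j
    · rw [if_pos hkj, if_pos hkj]
      rw [show (-μ) ^ k = (-1 : ℂ) ^ k * μ ^ k from neg_pow μ k]
      rw [show i + 1 + n + j = (i + 1) + k + (n + (j - k)) from by omega, pow_add, pow_add]
      ring
    · rw [if_neg hkj, if_neg hkj, mul_zero, mul_zero]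
  rw [Finset.sum_congr rfl hstep, ← Finset.mul_sum]
  have hsub : ∑ k ∈ range n,
      (if k ≤ j then (-1 : ℂ) ^ k * (k.choose (n - (i+1)) : ℂ) * (n.choose (j - k) : ℂ) else 0)
      = ∑ k ∈ range (j + 1),
          (-1 : ℂ) ^ k * (k.choose (n - (i+1)) : ℂ) * (n.choose (j - k) : ℂ) := by
    rw [← Finset.sum_subset (Finset.range_subset_range.mpr (by omega : j + 1 ≤ n))
      (fun x _ hx => if_neg (by simp at hx ⊢; omega))]
    exact Finset.sum_congr rfl (fun k hk => if_pos (by simp at hk; omega))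
  rw [hsub, Sid j (n - (i+1)) (by omega)]
  by_cases hij : n - (i+1) ≤ j
  · rw [if_pos hij]
    have e1 : n - 1 - (n - (i+1)) = i := by omega
    rw [e1]
    have hcs : i.choose (n - (j+1)) = i.choose (j - (n - (i+1))) := by
      rw [show n - (j+1) = i - (j - (n - (i+1))) from by omega,
        Nat.choose_symm (by omega : j - (n - (i+1)) ≤ i)]
    rw [hcs]
    rw [show (-μ) ^ i = (-1 : ℂ) ^ i * μ ^ i from neg_pow μ i]
    have key : (-1:ℂ) ^ i = -(μ ^ n * (-1:ℂ) ^ (n - (i+1))) := by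
      rw [hμ, ← pow_mul, ← pow_add]
      rw [show -((-1:ℂ) ^ (n*n + (n - (i+1)))) = (-1:ℂ) ^ (n*n + (n - (i+1)) + 1) from by
        rw [pow_succ]; ring]
      apply pow_mod2 (by norm_num : (-1:ℂ) * (-1:ℂ) = 1)
      obtain ⟨w, hw⟩ : Even (n * n + n) := by
        have := Nat.even_mul_succ_self n
        rwa [Nat.mul_succ] at this
      generalize hm : n * n = m at hw ⊢
      omega
    rw [key]
    rw [show i + 1 + n + j = (j+1) + n + i from by omega, pow_add, pow_add]
    ring
  · rw [if_neg hij]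
    rw [Nat.choose_eq_zero_of_lt (by omega : i < n - (j + 1))]
    norm_num

lemma mu_ne_zero {μ : ℂ} (hμ : μ * μ = 1) : μ ≠ 0 := by
  intro h; rw [h] at hμ; norm_num at hμ

lemma isUnit_J (μ : ℂ) (hμ : μ * μ = 1) : IsUnit (Jmat n μ) := by
  rw [Matrix.isUnit_iff_isUnit_det]
  have ht : (Jmat n μ).BlockTriangular id := by
    intro i j hij
    simp only [Jmat, Matrix.of_apply]
    rw [if_neg (by exact fun h => absurd h (by simp at hij ⊢; omega)),
      if_neg (by simp at hij ⊢; omega)]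
  rw [Matrix.det_of_upperTriangular ht]
  rw [isUnit_iff_ne_zero]
  apply Finset.prod_ne_zero_iff.2
  intro i _
  simp only [Jmat, Matrix.of_apply, if_pos rfl]
  exact mu_ne_zero hμ

lemma Rev_mul (A : Matrix (Fin n) (Fin n) ℂ) (i j : Fin n) :
    (Rev n * A) i j = A i.rev j := by
  rw [Matrix.mul_apply]
  rw [Finset.sum_eq_single_of_mem i.rev (Finset.mem_univ _)
    (fun k _ hk => by simp [Rev, if_neg hk, Matrix.of_apply])]
  simp [Rev]

lemma RevRev : Rev n * Rev n = 1 := by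
  ext i j
  rw [Rev_mul, Rev, Matrix.of_apply, Matrix.one_apply, Fin.rev_rev]
  by_cases h : i = j
  · rw [if_pos h, if_pos h.symm]
  · rw [if_neg h, if_neg (fun hh => h hh.symm)]

lemma isUnit_Rev : IsUnit (Rev n) := isUnit_iff_exists.2 ⟨Rev n, RevRev, RevRev⟩

lemma isUnit_Delta (μ : ℂ) (hμ : μ * μ = 1) : IsUnit (Delta n μ) := by
  have h1 : IsUnit (Rev n * Delta n μ) := by
    rw [Matrix.isUnit_iff_isUnit_det]
    have ht : (Rev n * Delta n μ).BlockTriangular id := by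
      intro i j hij
      have hij' : (j : ℕ) < (i : ℕ) := hij
      rw [Rev_mul, Delta, Matrix.of_apply]
      have hrev : n - (((i.rev) : ℕ) + 1) = (i : ℕ) := by
        rw [Fin.val_rev]; omega
      rw [hrev, Nat.choose_eq_zero_of_lt hij']
      norm_num
    rw [Matrix.det_of_upperTriangular ht, isUnit_iff_ne_zero]
    apply Finset.prod_ne_zero_iff.2
    intro i _
    rw [Rev_mul, Delta, Matrix.of_apply]
    have hrev : n - (((i.rev) : ℕ) + 1) = (i : ℕ) := by
      rw [Fin.val_rev]; omega
    rw [hrev, Nat.choose_self]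
    have hm0 := mu_ne_zero hμ
    have hm0' : -μ ≠ 0 := neg_ne_zero.2 hm0
    simp only [Nat.cast_one, mul_one]
    exact mul_ne_zero (pow_ne_zero _ hm0) (pow_ne_zero _ hm0')
  have hd : Delta n μ = Rev n * (Rev n * Delta n μ) := by
    rw [← mul_assoc, RevRev, one_mul]
  rw [hd]
  exact isUnit_Rev.mul h1

lemma JtDJ_pow (μ : ℂ) (hμ : μ * μ = 1) (k : ℕ) :
    ((Jmat n μ)ᵀ) ^ k * Delta n μ * (Jmat n μ) ^ k = Delta n μ := by
  induction k with
  | zero => simp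
  | succ k ih =>
    rw [pow_succ, pow_succ']
    calc ((Jmat n μ)ᵀ) ^ k * (Jmat n μ)ᵀ * Delta n μ * (Jmat n μ * (Jmat n μ) ^ k)
        = ((Jmat n μ)ᵀ) ^ k * ((Jmat n μ)ᵀ * Delta n μ * Jmat n μ) * (Jmat n μ) ^ k := by
          noncomm_ring
      _ = ((Jmat n μ)ᵀ) ^ k * Delta n μ * (Jmat n μ) ^ k := by rw [JtDJ μ hμ]
      _ = Delta n μ := ih

lemma JtDJ_n (μ : ℂ) (hμ : μ * μ = 1) {k : ℕ} (hk : k ≤ n) :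
    ((Jmat n μ)ᵀ) ^ k * Delta n μ * (Jmat n μ) ^ n
      = Delta n μ * (Jmat n μ) ^ (n - k) := by
  have h1 : (Jmat n μ) ^ n = (Jmat n μ) ^ k * (Jmat n μ) ^ (n - k) := by
    rw [← pow_add]; congr 1; omega
  rw [h1, ← mul_assoc, JtDJ_pow μ hμ k]

lemma ent_zeroM (i j : ℕ) : ent n (0 : Matrix (Fin n) (Fin n) ℂ) i j = 0 := by
  unfold ent; split <;> simp

lemma indep (μ : ℂ) (hμ : μ * μ = 1) (b : ℕ → ℂ)
    (hb : ∑ k ∈ range n, b k • (Jmat n μ) ^ k = 0) : ∀ k, k < n → b k = 0 := by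
  have H : ∀ j, j < n → ∑ k ∈ range n, b k * ((k.choose j : ℂ) * μ ^ (k + j)) = 0 := by
    intro j hj
    have h0 : 0 < n := by omega
    have h1 := congrArg (fun A => ent n A 0 j) hb
    simp only [ent_sum, ent_zeroM] at h1
    rw [Finset.sum_congr rfl (fun k _ => by
      rw [ent_smul, ent_Jpow μ hμ k h0 hj, if_pos (Nat.zero_le j), Nat.sub_zero])] at h1
    exact h1
  suffices S : ∀ m k, k < n → n ≤ k + m + 1 → b k = 0 by
    intro k hk; exact S n k hk (by omega)
  intro m
  induction m with
  | zero =>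
    intro k hk hk2
    have h2 := H k hk
    rw [Finset.sum_eq_single_of_mem k (mem_range.2 hk) (fun t ht htk => by
      rw [Nat.choose_eq_zero_of_lt (by simp at ht; omega)]
      simp)] at h2
    rw [Nat.choose_self, pow_mod2 hμ (show (k + k) % 2 = 0 % 2 by omega)] at h2
    simpa using h2
  | succ m ih =>
    intro k hk hk2
    by_cases h : n ≤ k + m + 1
    · exact ih k hk h
    · have h2 := H k hk
      rw [Finset.sum_eq_single_of_mem k (mem_range.2 hk) (fun t ht htk => by
        rcases lt_or_gt_of_ne htk with hlt | hgt
        · rw [Nat.choose_eq_zero_of_lt hlt]; simp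
        · rw [ih t (by simp at ht; omega) (by omega)]; simp)] at h2
      rw [Nat.choose_self, pow_mod2 hμ (show (k + k) % 2 = 0 % 2 by omega)] at h2
      simpa using h2

/-- splitting of the Jordan block -/
lemma Jsplit (μ : ℂ) : Jmat n μ = μ • (1 : Matrix (Fin n) (Fin n) ℂ) + Jmat n 0 := by
  ext i j
  simp only [Jmat, Matrix.of_apply, Matrix.add_apply, Matrix.smul_apply, Matrix.one_apply,
    smul_eq_mul]
  by_cases h : i = j
  · rw [if_pos h, if_pos h, if_pos h, mul_one, add_zero]
  · rw [if_neg h, if_neg h, if_neg h, mul_zero, zero_add]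

lemma ent_Kpow (t : ℕ) : ∀ {i j : ℕ}, i < n → j < n →
    ent n ((Jmat n 0) ^ t) i j = if j = i + t then 1 else 0 := by
  induction t with
  | zero =>
    intro i j hi hj
    rw [pow_zero]
    unfold ent
    rw [dif_pos ⟨hi, hj⟩, Matrix.one_apply]
    by_cases h : i = j
    · rw [if_pos (by simp [h, Fin.mk.injEq]), if_pos (by omega)]
    · rw [if_neg (by simp [Fin.mk.injEq]; omega), if_neg (by omega)]
  | succ t ih =>
    intro i j hi hj
    rw [pow_succ, mul_J 0 _ hi hj, zero_mul, zero_add]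
    rcases j with _ | s
    · rw [if_pos rfl, if_neg (by omega)]
    · have hs : s < n := by omega
      rw [if_neg (Nat.succ_ne_zero s), Nat.succ_sub_one, ih hi hs]
      by_cases h : s = i + t
      · rw [if_pos h, if_pos (by omega)]
      · rw [if_neg h, if_neg (by omega)]

lemma commutant (μ : ℂ) (C : Matrix (Fin n) (Fin n) ℂ)
    (hC : C * Jmat n μ = Jmat n μ * C) :
    C = ∑ t ∈ range n, (ent n C 0 t) • (Jmat n 0) ^ t := by
  have hK : C * Jmat n 0 = Jmat n 0 * C := by
    have h1 := hC
    rw [Jsplit μ, Matrix.mul_add, Matrix.add_mul] at h1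
    have h2 : C * (μ • (1 : Matrix (Fin n) (Fin n) ℂ)) =
        (μ • (1 : Matrix (Fin n) (Fin n) ℂ)) * C := by
      rw [Matrix.mul_smul, Matrix.smul_mul, mul_one, one_mul]
    rw [h2] at h1
    exact add_left_cancel h1
  have toep : ∀ i j : ℕ, i < n → j < n →
      ent n C i j = if i ≤ j then ent n C 0 (j - i) else 0 := by
    intro i
    induction i with
    | zero =>
      intro j hj _
      rw [if_pos (Nat.zero_le _), Nat.sub_zero]
    | succ i ih =>
      intro j hi hj
      have hi' : i < n := by omega
      have h1 : ent n C (i+1) j = ent n (Jmat n 0 * C) i j := by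
        rw [J_mul 0 C hi' hj, zero_mul, zero_add]
      rw [h1, ← hK, mul_J 0 C hi' hj, zero_mul, zero_add]
      rcases j with _ | s
      · rw [if_pos rfl, if_neg (by omega)]
      · have hs : s < n := by omega
        rw [if_neg (Nat.succ_ne_zero s), Nat.succ_sub_one, ih s hi' hs]
        by_cases h : i ≤ s
        · rw [if_pos h, if_pos (by omega : i + 1 ≤ s + 1),
            show s - i = s + 1 - (i+1) from by omega]
        · rw [if_neg h, if_neg (by omega)]
  apply ext_ent
  intro i j hi hj
  rw [ent_sum, toep i j hi hj]
  by_cases hij : i ≤ j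
  · rw [if_pos hij]
    rw [Finset.sum_eq_single_of_mem (j-i) (mem_range.2 (by omega)) (fun t ht htne => by
      rw [ent_smul, ent_Kpow t hi hj, if_neg (by simp at ht; omega), mul_zero])]
    rw [ent_smul, ent_Kpow (j-i) hi hj, if_pos (by omega), mul_one]
  · rw [if_neg hij]
    symm
    apply Finset.sum_eq_zero
    intro t ht
    rw [ent_smul, ent_Kpow t hi hj, if_neg (by omega), mul_zero]

lemma natCast_mat (c : ℕ) :
    ((c : ℕ) : Matrix (Fin n) (Fin n) ℂ) = (c : ℂ) • (1 : Matrix (Fin n) (Fin n) ℂ) := by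
  rw [← (map_natCast (algebraMap ℂ (Matrix (Fin n) (Fin n) ℂ)) c), Algebra.algebraMap_eq_smul_one]

lemma Kpow_as_Jsum (μ : ℂ) (t : ℕ) :
    (Jmat n 0) ^ t
      = ∑ m ∈ range (t+1), (((t.choose m : ℕ) : ℂ) * (-μ) ^ (t - m)) • (Jmat n μ) ^ m := by
  have hadd : Jmat n 0 = Jmat n μ + (-(μ • (1 : Matrix (Fin n) (Fin n) ℂ))) := by
    rw [Jsplit μ (n := n)]; abel
  have hcomm : Commute (Jmat n μ) (-(μ • (1 : Matrix (Fin n) (Fin n) ℂ))) := by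
    apply Commute.neg_right
    show Jmat n μ * (μ • 1) = (μ • 1) * Jmat n μ
    rw [Matrix.mul_smul, Matrix.smul_mul, mul_one, one_mul]
  rw [hadd, hcomm.add_pow t]
  apply Finset.sum_congr rfl
  intro m _
  rw [show (-(μ • (1 : Matrix (Fin n) (Fin n) ℂ))) = (-μ) • 1 from by rw [neg_smul],
    smul_pow, one_pow, natCast_mat]
  rw [mul_smul_comm, mul_one, mul_smul_comm, mul_one, smul_smul]

lemma comm_as_Jsum (μ : ℂ) (C : Matrix (Fin n) (Fin n) ℂ)
    (hC : C * Jmat n μ = Jmat n μ * C) :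
    ∃ a : ℕ → ℂ, C = ∑ k ∈ range n, a k • (Jmat n μ) ^ k := by
  refine ⟨fun k => ∑ t ∈ range n, ent n C 0 t * ((t.choose k : ℂ) * (-μ) ^ (t - k)), ?_⟩
  conv_lhs => rw [commutant μ C hC]
  rw [Finset.sum_congr rfl (fun t _ => by rw [Kpow_as_Jsum μ t, Finset.smul_sum])]
  rw [Finset.sum_congr rfl (fun t ht => Finset.sum_subset
    (Finset.range_subset_range.mpr (by simp at ht; omega : t + 1 ≤ n))
    (fun m _ hm => by
      rw [Nat.choose_eq_zero_of_lt (by simp at hm ⊢; omega)]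
      simp))]
  rw [Finset.sum_comm]
  apply Finset.sum_congr rfl
  intro m _
  rw [Finset.sum_smul]
  apply Finset.sum_congr rfl
  intro t _
  rw [smul_smul]

end Aux13

open Aux13

/-- `B·J_n(μ) + Bᵀ = 0` (with `μ = (-1)^n`) iff
`B = Δ_n · Σ_{ℓ<⌈n/2⌉} α_ℓ (J_n(μ)^ℓ + J_n(μ)^(n−1−ℓ))` for some scalars `α_ℓ`. -/
theorem stmt_13 (n : ℕ) (hn : 1 ≤ n) (μ : ℂ) (hμ : μ = (-1) ^ n)
    (B : Matrix (Fin n) (Fin n) ℂ) :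
    B * Jmat n μ + Bᵀ = 0 ↔
      ∃ α : ℕ → ℂ,
        B = Delta n μ *
          ∑ ℓ ∈ Finset.range ((n + 1) / 2),
            α ℓ • ((Jmat n μ) ^ ℓ + (Jmat n μ) ^ (n - 1 - ℓ)) := by
  have hμ2 : μ * μ = 1 := sq_of_sign μ hμ
  constructor
  · -- forward direction
    intro h
    haveI : Invertible (Delta n μ) :=
      Matrix.invertibleOfIsUnitDet _ ((Matrix.isUnit_iff_isUnit_det _).1 (isUnit_Delta μ hμ2))
    haveI : Invertible (Jmat n μ) :=
      Matrix.invertibleOfIsUnitDet _ ((Matrix.isUnit_iff_isUnit_det _).1 (isUnit_J μ hμ2))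
    set J := Jmat n μ with hJdef
    have hBt : Bᵀ = -(B * J) := eq_neg_of_add_eq_zero_left (by rw [add_comm]; exact h)
    have hB : B = Jᵀ * B * J := by
      have h1 : B = (-(B * J))ᵀ := by rw [← hBt, Matrix.transpose_transpose]
      rw [Matrix.transpose_neg, Matrix.transpose_mul, hBt] at h1
      conv_lhs => rw [h1]
      rw [Matrix.mul_neg, neg_neg, mul_assoc]
    obtain ⟨C, hBC⟩ : ∃ C, B = Delta n μ * C :=
      ⟨⅟(Delta n μ) * B, (mul_invOf_cancel_left _ _).symm⟩
    have hcomm : C * J = J * C := by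
      have h2 : Jᵀ * Delta n μ = Delta n μ * ⅟J := by
        have h3 := JtDJ (n := n) μ hμ2
        calc Jᵀ * Delta n μ = Jᵀ * Delta n μ * J * ⅟J := (mul_invOf_cancel_right _ _).symm
          _ = Delta n μ * ⅟J := by rw [h3]
      have h4 : Delta n μ * C = Jᵀ * (Delta n μ * C) * J := by rw [← hBC]; exact hB
      rw [← mul_assoc, h2] at h4
      -- h4 : Δ * C = Δ * ⅟J * C * J
      have h6 := congrArg (fun X => ⅟(Delta n μ) * X) h4
      simp only [invOf_mul_cancel_left] at h6
      rw [mul_assoc, mul_assoc, invOf_mul_cancel_left] at h6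
      calc C * J = J * (⅟J * (C * J)) := by rw [mul_invOf_cancel_left]
        _ = J * C := by rw [← h6]
    obtain ⟨a, ha⟩ := comm_as_Jsum μ C hcomm
    -- derive palindromicity
    have hBJ : B * J = Delta n μ * ∑ k ∈ range n, a k • J ^ (k + 1) := by
      rw [hBC, ha, mul_assoc]
      congr 1
      rw [Finset.sum_mul]
      exact Finset.sum_congr rfl fun k _ => by rw [smul_mul_assoc, ← pow_succ]
    have hBT : Bᵀ = -(Delta n μ * ∑ k ∈ range n, a k • J ^ (n - k)) := by
      rw [hBC, Matrix.transpose_mul, DeltaT hn μ hμ, Matrix.mul_neg]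
      congr 1
      rw [ha, Matrix.transpose_sum, Finset.sum_mul, Finset.mul_sum]
      apply Finset.sum_congr rfl
      intro k hk
      rw [Matrix.transpose_smul, Matrix.transpose_pow, smul_mul_assoc, Matrix.mul_smul]
      congr 1
      rw [← mul_assoc]
      exact JtDJ_n μ hμ2 (by simp at hk; omega)
    have hmain : Delta n μ * (∑ k ∈ range n, a k • J ^ (k + 1))
        = Delta n μ * (∑ k ∈ range n, a k • J ^ (n - k)) := by
      have h7 := h
      rw [hBJ, hBT, ← sub_eq_add_neg, sub_eq_zero] at h7
      exact h7
    have heq := (isUnit_Delta μ hμ2).mul_left_cancel hmain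
    have heq2 : ∑ k ∈ range n, a k • J ^ k = ∑ k ∈ range n, a k • J ^ (n - 1 - k) := by
      apply (isUnit_J μ hμ2).mul_right_cancel
      rw [Finset.sum_mul, Finset.sum_mul]
      rw [Finset.sum_congr rfl (fun k _ => by rw [smul_mul_assoc, ← pow_succ] :
        ∀ k ∈ range n, (a k • J ^ k) * J = a k • J ^ (k+1))]
      rw [Finset.sum_congr rfl (fun k hk => by
        rw [smul_mul_assoc, ← pow_succ, show n - 1 - k + 1 = n - k from by simp at hk; omega] :
        ∀ k ∈ range n, (a k • J ^ (n-1-k)) * J = a k • J ^ (n-k))]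
      exact heq
    have hpal : ∀ k, k < n → a k = a (n - 1 - k) := by
      have hrefl : ∑ k ∈ range n, a k • J ^ (n - 1 - k)
          = ∑ k ∈ range n, a (n - 1 - k) • J ^ k := by
        rw [← Finset.sum_range_reflect (fun k => a (n - 1 - k) • J ^ k) n]
        apply Finset.sum_congr rfl
        intro k hk
        rw [show n - 1 - (n - 1 - k) = k from by simp at hk; omega]
      have hz : ∑ k ∈ range n, (a k - a (n - 1 - k)) • J ^ k = 0 := by
        rw [Finset.sum_congr rfl (fun k _ => sub_smul (a k) (a (n-1-k)) (J ^ k)),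
          Finset.sum_sub_distrib, heq2, hrefl, sub_self]
      intro k hk
      exact sub_eq_zero.mp (indep μ hμ2 _ hz k hk)
    -- construct α
    set m := (n + 1) / 2 with hm
    refine ⟨fun ℓ => a ℓ / 2 + (if ℓ < n - m then a ℓ / 2 else 0), ?_⟩
    rw [hBC]
    congr 1
    have h9 : ∑ ℓ ∈ range m, (if ℓ < n - m then a ℓ / 2 else 0) • (J ^ ℓ + J ^ (n - 1 - ℓ))
        = ∑ ℓ ∈ range (n - m), (a ℓ / 2) • (J ^ ℓ + J ^ (n - 1 - ℓ)) := by
      rw [← Finset.sum_subset (Finset.range_subset_range.mpr (show n - m ≤ m by omega))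
        (fun x _ hx => by rw [if_neg (by simp at hx ⊢; omega), zero_smul])]
      exact Finset.sum_congr rfl (fun ℓ hℓ => by rw [if_pos (by simp at hℓ; omega)])
    have h10 : ∑ ℓ ∈ Finset.Ico m n, (a ℓ / 2) • (J ^ ℓ + J ^ (n - 1 - ℓ))
        = ∑ ℓ ∈ range (n - m), (a ℓ / 2) • (J ^ ℓ + J ^ (n - 1 - ℓ)) := by
      apply Finset.sum_nbij' (fun ℓ => n - 1 - ℓ) (fun ℓ => n - 1 - ℓ)
      · intro ℓ hℓ; simp [Finset.mem_Ico] at *; omega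
      · intro ℓ hℓ; simp [Finset.mem_Ico] at *; omega
      · intro ℓ hℓ; simp [Finset.mem_Ico] at hℓ; omega
      · intro ℓ hℓ; simp [Finset.mem_Ico] at hℓ; omega
      · intro ℓ hℓ
        simp only [Finset.mem_Ico] at hℓ
        rw [show n - 1 - (n - 1 - ℓ) = ℓ from by omega, ← hpal ℓ (by omega), add_comm]
    have h2C : ∑ ℓ ∈ range n, (a ℓ / 2) • (J ^ ℓ + J ^ (n - 1 - ℓ)) = C := by
      rw [ha]
      rw [Finset.sum_congr rfl (fun ℓ _ => smul_add (a ℓ / 2) (J ^ ℓ) (J ^ (n - 1 - ℓ))),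
        Finset.sum_add_distrib]
      have hr : ∑ ℓ ∈ range n, (a ℓ / 2) • J ^ (n - 1 - ℓ)
          = ∑ ℓ ∈ range n, (a ℓ / 2) • J ^ ℓ := by
        rw [Finset.sum_congr rfl (fun ℓ hℓ => by
          rw [hpal ℓ (by simp at hℓ; omega)] :
          ∀ ℓ ∈ range n, (a ℓ / 2) • J ^ (n - 1 - ℓ)
            = (a (n - 1 - ℓ) / 2) • J ^ (n - 1 - ℓ))]
        exact Finset.sum_range_reflect (fun ℓ => (a ℓ / 2) • J ^ ℓ) n
      rw [hr, ← Finset.sum_add_distrib]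
      apply Finset.sum_congr rfl
      intro ℓ _
      rw [← add_smul]
      congr 1
      ring
    calc C = ∑ ℓ ∈ range n, (a ℓ / 2) • (J ^ ℓ + J ^ (n - 1 - ℓ)) := h2C.symm
      _ = ∑ ℓ ∈ range m, (a ℓ / 2) • (J ^ ℓ + J ^ (n - 1 - ℓ))
            + ∑ ℓ ∈ Finset.Ico m n, (a ℓ / 2) • (J ^ ℓ + J ^ (n - 1 - ℓ)) := by
          rw [Finset.range_eq_Ico,
            ← Finset.sum_Ico_consecutive _ (Nat.zero_le m) (show m ≤ n by omega),
            ← Finset.range_eq_Ico]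
      _ = ∑ ℓ ∈ range m, (a ℓ / 2) • (J ^ ℓ + J ^ (n - 1 - ℓ))
            + ∑ ℓ ∈ range m, (if ℓ < n - m then a ℓ / 2 else 0) • (J ^ ℓ + J ^ (n - 1 - ℓ)) := by
          rw [h10, h9]
      _ = ∑ ℓ ∈ range m, (a ℓ / 2 + (if ℓ < n - m then a ℓ / 2 else 0))
            • (J ^ ℓ + J ^ (n - 1 - ℓ)) := by
          rw [← Finset.sum_add_distrib]
          exact Finset.sum_congr rfl (fun ℓ _ => (add_smul _ _ _).symm)
  · -- backward direction
    rintro ⟨α, hB⟩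
    rw [hB, Matrix.transpose_mul, DeltaT hn μ hμ, Matrix.mul_neg]
    rw [add_neg_eq_zero]
    set J := Jmat n μ with hJdef
    set m := (n + 1) / 2 with hm
    rw [mul_assoc, Finset.sum_mul, Finset.mul_sum, Matrix.transpose_sum, Finset.sum_mul]
    apply Finset.sum_congr rfl
    intro ℓ hℓ
    have hℓn : ℓ ≤ n - 1 := by simp [hm] at hℓ; omega
    rw [smul_mul_assoc, Matrix.mul_smul, Matrix.transpose_smul, smul_mul_assoc]
    congr 1
    rw [add_mul, Matrix.transpose_add, Matrix.transpose_pow, Matrix.transpose_pow, add_mul]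
    rw [← pow_succ, ← pow_succ]
    rw [show n - 1 - ℓ + 1 = n - ℓ from by omega]
    have e1 : (Jᵀ) ^ ℓ * (Delta n μ * J ^ n) = Delta n μ * J ^ (n - ℓ) := by
      rw [← mul_assoc]; exact JtDJ_n μ hμ2 (by omega)
    have e2 : (Jᵀ) ^ (n - 1 - ℓ) * (Delta n μ * J ^ n) = Delta n μ * J ^ (ℓ + 1) := by
      rw [← mul_assoc, JtDJ_n μ hμ2 (by omega : n - 1 - ℓ ≤ n),
        show n - (n - 1 - ℓ) = ℓ + 1 from by omega]
    rw [e1, e2, Matrix.mul_add, add_comm]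
end
end
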